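/- arXiv:2002.01084 — 7 statements merged into one kernel-verified Lean document; each statement's English description precedes it below -/
import Mathlib

section
/- Fix an integer n ≥ 2. Let ξ be a nonnegative random variable with cumulative distribution function F, and let W ∈ D(n) be bounded from below with lim_{y→∞} W(y) = 0. Then E[W(ξ)] = ∫₀^∞ (−1)^n W^(n)(y) F_n(y) dy, where both sides take values in [0, ∞]. -/
/-!
Write `c k = (-1)^k W^(k)`. Each `c k` with `k < n` tends to `0` at infinity (a convergent
function with monotone derivative has derivative tending to `0`), so `c k x = ∫ₓ^∞ c (k+1)`, and
iterating gives Cauchy's formula `W x = ∫ₓ^∞ (z - x)^(n-1) / (n-1)! · c n z dz` for `x > 0`, and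
for `x = 0` by right-continuity and monotone convergence. Everything being nonnegative, Tonelli
exchanges `E` with the `z`-integral, and the inner expectation `E[(z - ξ)^(n-1) / (n-1)!; ξ ≤ z]`
is `F_n(z)`, by the same repeated-integration formula applied to the integrals defining `F_n`.
-/

open MeasureTheory Filter Set Topology

/-- Iterated antiderivatives of a cdf: `iterCdf F 0 = F₁ = F` and
`iterCdf F i y = F_{i+1}(y) = ∫₀^y F_i(z) dz`. -/
noncomputable def iterCdf (F : ℝ → ℝ) : ℕ → ℝ → ℝ
  | 0 => F
  | i + 1 => fun y => ∫ z in (0:ℝ)..y, iterCdf F i z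

open scoped ENNReal Nat

lemma integral_sub_pow_div_factorial (i : ℕ) (a b : ℝ) :
    ∫ t in a..b, (t - a) ^ i / i ! = (b - a) ^ (i + 1) / (i + 1)! := by
  rw [intervalIntegral.integral_div, intervalIntegral.integral_comp_sub_right (· ^ i),
    integral_pow, Nat.factorial_succ]
  push_cast
  field_simp
  ring

lemma integral_sub_pow_div_factorial' (i : ℕ) (a b : ℝ) :
    ∫ t in a..b, (b - t) ^ i / i ! = (b - a) ^ (i + 1) / (i + 1)! := by
  rw [intervalIntegral.integral_div, intervalIntegral.integral_comp_sub_left (· ^ i),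
    integral_pow, Nat.factorial_succ]
  push_cast
  field_simp
  ring

lemma setLIntegral_Icc_sub_pow_div_factorial (i : ℕ) {a b : ℝ} (hab : a ≤ b) :
    ∫⁻ t in Icc a b, ENNReal.ofReal ((t - a) ^ i / i !)
      = ENNReal.ofReal ((b - a) ^ (i + 1) / (i + 1)!) := by
  rw [← integral_sub_pow_div_factorial, intervalIntegral.integral_of_le hab,
    ofReal_integral_eq_lintegral_ofReal, setLIntegral_congr Ioc_ae_eq_Icc]
  · exact (Continuous.integrableOn_Icc (by fun_prop)).mono_set Ioc_subset_Icc_self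
  · filter_upwards [ae_restrict_mem measurableSet_Ioc] with t ht
    have : 0 ≤ t - a := by linarith [ht.1]
    positivity

lemma setLIntegral_Icc_sub_pow_div_factorial' (i : ℕ) {a b : ℝ} (hab : a ≤ b) :
    ∫⁻ t in Icc a b, ENNReal.ofReal ((b - t) ^ i / i !)
      = ENNReal.ofReal ((b - a) ^ (i + 1) / (i + 1)!) := by
  rw [← integral_sub_pow_div_factorial', intervalIntegral.integral_of_le hab,
    ofReal_integral_eq_lintegral_ofReal, setLIntegral_congr Ioc_ae_eq_Icc]
  · exact (Continuous.integrableOn_Icc (by fun_prop)).mono_set Ioc_subset_Icc_self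
  · filter_upwards [ae_restrict_mem measurableSet_Ioc] with t ht
    have : 0 ≤ b - t := by linarith [ht.2]
    positivity

lemma lintegral_setLIntegral_Ici_swap {α : Type*} [MeasurableSpace α] {μ : Measure α}
    {ν : Measure ℝ} [SFinite μ] [SFinite ν] {ξ : α → ℝ} (hξ : Measurable ξ)
    {f : α → ℝ → ℝ≥0∞} (hf : Measurable (Function.uncurry f)) :
    ∫⁻ a, ∫⁻ z in Ici (ξ a), f a z ∂ν ∂μ = ∫⁻ z, ∫⁻ a in {a | ξ a ≤ z}, f a z ∂μ ∂ν := by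
  let S : Set (α × ℝ) := {p | ξ p.1 ≤ p.2}
  have hS : MeasurableSet S := measurableSet_le (hξ.comp measurable_fst) measurable_snd
  have inner_z : ∀ a, ∫⁻ z in Ici (ξ a), f a z ∂ν
      = ∫⁻ z, S.indicator (Function.uncurry f) (a, z) ∂ν :=
    fun a => (lintegral_indicator measurableSet_Ici _).symm
  have inner_a : ∀ z, ∫⁻ a in {a | ξ a ≤ z}, f a z ∂μ
      = ∫⁻ a, S.indicator (Function.uncurry f) (a, z) ∂μ :=
    fun z => (lintegral_indicator (hξ measurableSet_Iic) _).symm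
  simp_rw [inner_z, inner_a]
  exact lintegral_lintegral_swap (hf.indicator hS).aemeasurable

/-- The `(j+1)`-fold iterated integral of `G` over `[x, ∞)`, in Cauchy's closed form. -/
noncomputable def iterTailIntegral (G : ℝ → ℝ≥0∞) (j : ℕ) (x : ℝ) : ℝ≥0∞ :=
  ∫⁻ z in Ici x, ENNReal.ofReal ((z - x) ^ j / j !) * G z

lemma iterTailIntegral_zero (G : ℝ → ℝ≥0∞) (x : ℝ) :
    iterTailIntegral G 0 x = ∫⁻ z in Ici x, G z := by
  simp [iterTailIntegral]

lemma iterTailIntegral_succ {G : ℝ → ℝ≥0∞} (hG : Measurable G) (j : ℕ) (x : ℝ) :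
    ∫⁻ y in Ici x, iterTailIntegral G j y = iterTailIntegral G (j + 1) x := by
  unfold iterTailIntegral
  rw [lintegral_setLIntegral_Ici_swap (μ := volume.restrict (Ici x)) measurable_id' (by fun_prop),
    ← lintegral_indicator measurableSet_Ici]
  refine lintegral_congr fun z => ?_
  rw [show {a : ℝ | a ≤ z} = Iic z from rfl, Measure.restrict_restrict measurableSet_Iic,
    Iic_inter_Ici]
  by_cases hz : x ≤ z
  · rw [indicator_of_mem (mem_Ici.2 hz), lintegral_mul_const _ (by fun_prop),
      setLIntegral_Icc_sub_pow_div_factorial' j hz]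
  · rw [indicator_of_notMem (show z ∉ Ici x from hz)]
    simp [Icc_eq_empty hz]

lemma tendsto_iterTailIntegral {G : ℝ → ℝ≥0∞} (hG : Measurable G) (j : ℕ) {x : ℕ → ℝ}
    {x₀ : ℝ} (hx : Antitone x) (hlim : Tendsto x atTop (𝓝 x₀)) :
    Tendsto (fun i => iterTailIntegral G j (x i)) atTop (𝓝 (iterTailIntegral G j x₀)) := by
  let K : ℝ → ℝ → ℝ≥0∞ := fun a =>
    (Ici a).indicator fun z => ENNReal.ofReal ((z - a) ^ j / j !) * G z
  have hK : ∀ a, iterTailIntegral G j a = ∫⁻ z, K a z :=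
    fun a => (lintegral_indicator measurableSet_Ici _).symm
  simp_rw [hK]
  have hx₀ : ∀ i, x₀ ≤ x i := hx.le_of_tendsto hlim
  refine lintegral_tendsto_of_tendsto_of_monotone
    (fun i => ((by fun_prop : Measurable _).indicator measurableSet_Ici).aemeasurable)
    (ae_of_all _ fun z i i' hii' => ?_) ?_
  · by_cases h : x i ≤ z
    · have h' : x i' ≤ z := (hx hii').trans h
      simp only [K, indicator_of_mem (mem_Ici.2 h), indicator_of_mem (mem_Ici.2 h')]
      gcongr
      exact hx hii'
    · simp [K, indicator_of_notMem (show z ∉ Ici (x i) from h)]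
  filter_upwards [Measure.ae_ne volume x₀] with z hz
  rcases hz.lt_or_gt with hz | hz
  · have h0 : ∀ a, x₀ ≤ a → K a z = 0 := fun a ha =>
      indicator_of_notMem (show z ∉ Ici a from fun h => (hz.trans_le ha).not_ge h) _
    simp [h0 _ le_rfl, h0 _ (hx₀ _)]
  · have hpos : ENNReal.ofReal ((z - x₀) ^ j / j !) ≠ 0 :=
      (ENNReal.ofReal_pos.2 (by have := sub_pos.2 hz; positivity)).ne'
    have hev : ∀ᶠ i in atTop, K (x i) z = ENNReal.ofReal ((z - x i) ^ j / j !) * G z := by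
      filter_upwards [hlim.eventually (gt_mem_nhds hz)] with i hi
      exact indicator_of_mem (mem_Ici.2 hi.le) _
    rw [show K x₀ z = _ from indicator_of_mem (mem_Ici.2 hz.le) _]
    refine Tendsto.congr' (EventuallyEq.symm hev) (ENNReal.Tendsto.mul_const ?_ (Or.inl hpos))
    exact ENNReal.tendsto_ofReal (((tendsto_const_nhds.sub hlim).pow j).div_const _)

lemma eq_iterTailIntegral_of_tendsto_nhdsGT {G : ℝ → ℝ≥0∞} (hG : Measurable G) (j : ℕ)
    {f : ℝ → ℝ≥0∞} {x₀ : ℝ} (hf : Tendsto f (𝓝[>] x₀) (𝓝 (f x₀)))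
    (h : ∀ x > x₀, f x = iterTailIntegral G j x) : f x₀ = iterTailIntegral G j x₀ := by
  have hx : Tendsto (fun i : ℕ => x₀ + 1 / ((i : ℝ) + 1)) atTop (𝓝 x₀) := by
    simpa using tendsto_one_div_add_atTop_nhds_zero_nat.const_add x₀
  have hpos : ∀ i : ℕ, x₀ < x₀ + 1 / ((i : ℝ) + 1) :=
    fun _ => lt_add_of_pos_right _ Nat.one_div_pos_of_nat
  refine tendsto_nhds_unique ?_ (tendsto_iterTailIntegral hG j (fun i i' hii' => by gcongr) hx)
  exact (hf.comp (tendsto_nhdsWithin_iff.2 ⟨hx, Eventually.of_forall hpos⟩)).congr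
    fun i => h _ (hpos i)

lemma monotoneOn_Ioi_of_hasDerivAt_nonneg {f f' : ℝ → ℝ} {a : ℝ}
    (hf : ∀ y > a, HasDerivAt f (f' y) y) (hf' : ∀ y > a, 0 ≤ f' y) : MonotoneOn f (Ioi a) :=
  monotoneOn_of_hasDerivWithinAt_nonneg (convex_Ioi a)
    (fun y hy => (hf y hy).continuousAt.continuousWithinAt)
    (fun y hy => (hf y (interior_subset hy)).hasDerivWithinAt)
    (fun y hy => hf' y (interior_subset hy))

lemma tendsto_zero_of_hasDerivAt_of_monotoneOn {u u' : ℝ → ℝ} {a L : ℝ}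
    (hu : ∀ y > a, HasDerivAt u (u' y) y) (hmono : MonotoneOn u' (Ioi a))
    (hlim : Tendsto u atTop (𝓝 L)) : Tendsto u' atTop (𝓝 0) := by
  have slope : ∀ s, a < s → ∃ η ∈ Ioo s (s + 1), u' η = u (s + 1) - u s := by
    intro s hs
    obtain ⟨η, hη, h⟩ := exists_hasDerivAt_eq_slope u u' (lt_add_one s)
      (fun y hy => (hu y (hs.trans_le hy.1)).continuousAt.continuousWithinAt)
      (fun y hy => hu y (hs.trans hy.1))
    exact ⟨η, hη, by simpa using h⟩
  have lower : ∀ᶠ y in atTop, u y - u (y - 1) ≤ u' y := by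
    filter_upwards [eventually_gt_atTop (a + 1)] with y hy
    obtain ⟨η, hη, h⟩ := slope (y - 1) (by linarith)
    rw [sub_add_cancel] at h hη
    exact h ▸ hmono (by simp only [mem_Ioi]; linarith [hη.1]) (by simp only [mem_Ioi]; linarith)
      hη.2.le
  have upper : ∀ᶠ y in atTop, u' y ≤ u (y + 1) - u y := by
    filter_upwards [eventually_gt_atTop a] with y hy
    obtain ⟨η, hη, h⟩ := slope y hy
    exact h ▸ hmono hy (hy.trans hη.1) hη.1.le
  have shift : ∀ b : ℝ, Tendsto (fun y => u (y + b)) atTop (𝓝 L) :=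
    fun b => hlim.comp (tendsto_atTop_add_const_right _ b tendsto_id)
  refine tendsto_of_tendsto_of_tendsto_of_le_of_le' ?_ ?_ lower upper
  · simpa [sub_eq_add_neg] using hlim.sub (shift (-1))
  · simpa using (shift 1).sub hlim

lemma ofReal_eq_setLIntegral_Ici_of_hasDerivAt_neg {f g : ℝ → ℝ} {x : ℝ}
    (hf : ∀ y ∈ Ici x, HasDerivAt f (-g y) y) (hg : ∀ y ∈ Ioi x, 0 ≤ g y)
    (hlim : Tendsto f atTop (𝓝 0)) :
    ENNReal.ofReal (f x) = ∫⁻ y in Ici x, ENNReal.ofReal (g y) := by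
  have hf' : ∀ y ∈ Ici x, HasDerivAt (fun y => -f y) (g y) y :=
    fun y hy => neg_neg (g y) ▸ (hf y hy).neg
  have hlim' : Tendsto (fun y => -f y) atTop (𝓝 0) := by simpa using hlim.neg
  rw [setLIntegral_congr Ioi_ae_eq_Ici.symm, ← ofReal_integral_eq_lintegral_ofReal
    (integrableOn_Ioi_deriv_of_nonneg' hf' hg hlim')
    (ae_restrict_of_forall_mem measurableSet_Ioi hg),
    integral_Ioi_of_hasDerivAt_of_nonneg' hf' hg hlim']
  simp

lemma measurable_indicator_of_hasDerivAt {f f' : ℝ → ℝ} {s : Set ℝ} (hs : MeasurableSet s)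
    (hf : ∀ y ∈ s, HasDerivAt f (f' y) y) : Measurable (s.indicator f') := by
  rw [indicator_congr fun y hy => (hf y hy).deriv.symm]
  exact (measurable_deriv f).indicator hs

section IteratedDerivatives

variable {n : ℕ} {c : ℕ → ℝ → ℝ}

lemma tendsto_atTop_zero_of_hasDerivAt_neg_succ
    (hderiv : ∀ k < n, ∀ y > (0:ℝ), HasDerivAt (c k) (-c (k + 1) y) y)
    (hnonneg : ∀ k, 1 ≤ k → k ≤ n → ∀ y > (0:ℝ), 0 ≤ c k y)
    (hlim : Tendsto (c 0) atTop (𝓝 0)) {k : ℕ} (hk : k < n) : Tendsto (c k) atTop (𝓝 0) := by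
  induction k with
  | zero => exact hlim
  | succ k ih =>
    have hmono : MonotoneOn (-c (k + 1)) (Ioi 0) :=
      monotoneOn_Ioi_of_hasDerivAt_nonneg (fun y hy => by simpa using (hderiv (k + 1) hk y hy).neg)
        (hnonneg (k + 2) (by omega) (by omega))
    simpa using (tendsto_zero_of_hasDerivAt_of_monotoneOn (hderiv k (by omega)) hmono
      (ih (by omega))).neg

lemma ofReal_eq_iterTailIntegral
    (hderiv : ∀ k < n, ∀ y > (0:ℝ), HasDerivAt (c k) (-c (k + 1) y) y)
    (hnonneg : ∀ k, 1 ≤ k → k ≤ n → ∀ y > (0:ℝ), 0 ≤ c k y)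
    (hlim : Tendsto (c 0) atTop (𝓝 0)) {G : ℝ → ℝ≥0∞} (hG : Measurable G)
    (hGc : ∀ z > (0:ℝ), G z = ENNReal.ofReal (c n z)) {j k : ℕ} (hjk : k + j + 1 = n) {x : ℝ}
    (hx : 0 < x) : ENNReal.ofReal (c k x) = iterTailIntegral G j x := by
  have tail : ∀ k < n, ∀ x > (0:ℝ),
      ENNReal.ofReal (c k x) = ∫⁻ y in Ici x, ENNReal.ofReal (c (k + 1) y) :=
    fun k hk x hx => ofReal_eq_setLIntegral_Ici_of_hasDerivAt_neg
      (fun y hy => hderiv k hk y (hx.trans_le hy))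
      (fun y hy => hnonneg (k + 1) (by omega) (by omega) y (hx.trans hy))
      (tendsto_atTop_zero_of_hasDerivAt_neg_succ hderiv hnonneg hlim hk)
  induction j generalizing k x with
  | zero =>
    rw [tail k (by omega) x hx, iterTailIntegral_zero]
    refine setLIntegral_congr_fun measurableSet_Ici fun y hy => ?_
    rw [hGc y (hx.trans_le hy), ← hjk]
  | succ j ih =>
    rw [tail k (by omega) x hx, ← iterTailIntegral_succ hG]
    exact setLIntegral_congr_fun measurableSet_Ici fun y hy =>
      ih (k := k + 1) (by omega) (hx.trans_le hy)

end IteratedDerivatives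

lemma iterCdf_nonneg_monotoneOn {F : ℝ → ℝ} (hF0 : ∀ y, 0 ≤ F y) (hFm : MonotoneOn F (Ici 0))
    (i : ℕ) : (∀ y ∈ Ici (0:ℝ), 0 ≤ iterCdf F i y) ∧ MonotoneOn (iterCdf F i) (Ici 0) := by
  induction i with
  | zero => exact ⟨fun y _ => hF0 y, hFm⟩
  | succ i ih =>
    obtain ⟨hnn, hmono⟩ := ih
    have hint : ∀ a b : ℝ, 0 ≤ a → a ≤ b → IntervalIntegrable (iterCdf F i) volume a b :=
      fun a b ha hab => MonotoneOn.intervalIntegrable <| hmono.mono <| by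
        rw [uIcc_of_le hab]; exact Icc_subset_Ici_iff hab |>.2 ha
    have hpos : ∀ a b : ℝ, 0 ≤ a → a ≤ b → 0 ≤ ∫ z in a..b, iterCdf F i z :=
      fun a b ha hab => intervalIntegral.integral_nonneg hab fun t ht => hnn t (ha.trans ht.1)
    refine ⟨fun y hy => hpos 0 y le_rfl hy, fun a ha b _ hab => ?_⟩
    show (∫ z in (0:ℝ)..a, iterCdf F i z) ≤ ∫ z in (0:ℝ)..b, iterCdf F i z
    rw [← intervalIntegral.integral_add_adjacent_intervals (hint 0 a le_rfl ha) (hint a b ha hab)]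
    linarith [hpos a b ha hab]

section Cdf

variable {Ω : Type*} [MeasurableSpace Ω] (P : Measure Ω) [IsFiniteMeasure P] {ξ : Ω → ℝ}

lemma ofReal_iterCdf_eq_setLIntegral (hξ : Measurable ξ) (hξ0 : ∀ ω, 0 ≤ ξ ω) (i : ℕ) {z : ℝ}
    (hz : 0 ≤ z) :
    ENNReal.ofReal (iterCdf (fun t => (P {ω | ξ ω ≤ t}).toReal) i z)
      = ∫⁻ ω in {ω | ξ ω ≤ z}, ENNReal.ofReal ((z - ξ ω) ^ i / i !) ∂P := by
  induction i generalizing z with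
  | zero => simp [iterCdf]
  | succ i ih =>
    set F : ℝ → ℝ := fun t => (P {ω | ξ ω ≤ t}).toReal
    obtain ⟨hnn, hmono⟩ := iterCdf_nonneg_monotoneOn (F := F) (fun _ => ENNReal.toReal_nonneg)
      (fun a _ b _ hab => ENNReal.toReal_mono (measure_ne_top _ _)
        (measure_mono fun ω hω => le_trans hω hab)) i
    have hint : IntervalIntegrable (iterCdf F i) volume 0 z :=
      MonotoneOn.intervalIntegrable (hmono.mono (by rw [uIcc_of_le hz]; exact Icc_subset_Ici_self))
    calc ENNReal.ofReal (iterCdf F (i + 1) z)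
        = ∫⁻ t in Icc 0 z, ENNReal.ofReal (iterCdf F i t) := by
          rw [← setLIntegral_congr Ioc_ae_eq_Icc, ← ofReal_integral_eq_lintegral_ofReal hint.1
            (ae_restrict_of_forall_mem measurableSet_Ioc fun t ht => hnn t ht.1.le),
            ← intervalIntegral.integral_of_le hz]
          rfl
      _ = ∫⁻ t in Icc 0 z, ∫⁻ ω in {ω | ξ ω ≤ t}, ENNReal.ofReal ((t - ξ ω) ^ i / i !) ∂P :=
          setLIntegral_congr_fun measurableSet_Icc fun t ht => ih ht.1
      _ = ∫⁻ ω, ∫⁻ t in Ici (ξ ω), ENNReal.ofReal ((t - ξ ω) ^ i / i !)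
            ∂(volume.restrict (Icc 0 z)) ∂P :=
          (lintegral_setLIntegral_Ici_swap hξ (by fun_prop)).symm
      _ = ∫⁻ ω, {ω | ξ ω ≤ z}.indicator
            (fun ω => ENNReal.ofReal ((z - ξ ω) ^ (i + 1) / (i + 1)!)) ω ∂P := by
          refine lintegral_congr fun ω => ?_
          rw [Measure.restrict_restrict measurableSet_Ici, ← Ici_inter_Iic, ← inter_assoc,
            Ici_inter_Ici, sup_eq_left.2 (hξ0 ω), Ici_inter_Iic]
          by_cases h : ξ ω ≤ z
          · rw [indicator_of_mem (show ω ∈ {ω | ξ ω ≤ z} from h),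
              setLIntegral_Icc_sub_pow_div_factorial i h]
          · rw [indicator_of_notMem (show ω ∉ {ω | ξ ω ≤ z} from h), Icc_eq_empty h,
              Measure.restrict_empty, lintegral_zero_measure]
      _ = _ := lintegral_indicator (hξ measurableSet_Iic) _

lemma lintegral_iterTailIntegral_eq_setLIntegral_iterCdf (hξ : Measurable ξ)
    (hξ0 : ∀ ω, 0 ≤ ξ ω) {G : ℝ → ℝ≥0∞} (hG : Measurable G) (j : ℕ) :
    ∫⁻ ω, iterTailIntegral G j (ξ ω) ∂P
      = ∫⁻ z in Ici 0, ENNReal.ofReal (iterCdf (fun t => (P {ω | ξ ω ≤ t}).toReal) j z) * G z := by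
  unfold iterTailIntegral
  rw [lintegral_setLIntegral_Ici_swap hξ (by fun_prop), ← lintegral_indicator measurableSet_Ici]
  refine lintegral_congr fun z => ?_
  rw [lintegral_mul_const _ (by fun_prop)]
  by_cases hz : 0 ≤ z
  · rw [indicator_of_mem (mem_Ici.2 hz), ofReal_iterCdf_eq_setLIntegral P hξ hξ0 j hz]
  · have : {ω | ξ ω ≤ z} = ∅ := eq_empty_of_forall_notMem fun ω h => hz ((hξ0 ω).trans h)
    rw [indicator_of_notMem (show z ∉ Ici 0 from hz), this]
    simp

end Cdf

theorem stmt1_general {Ω : Type*} [MeasurableSpace Ω] (P : Measure Ω) [IsProbabilityMeasure P]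
    (ξ : Ω → ℝ) (hξm : Measurable ξ) (hξ0 : ∀ ω, 0 ≤ ξ ω)
    (n : ℕ) (hn : 2 ≤ n)
    (W : ℝ → ℝ) (d : ℕ → ℝ → ℝ)
    (hd0 : d 0 = W)
    (hderiv : ∀ k < n, ∀ y > (0:ℝ), HasDerivAt (d k) (d (k + 1) y) y)
    (hsign : ∀ k, 1 ≤ k → k ≤ n → ∀ y > (0:ℝ), 0 ≤ (-1 : ℝ) ^ k * d k y)
    (hW0 : Filter.Tendsto W (nhdsWithin 0 (Set.Ioi 0)) (nhds (W 0)))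
    (hWinf : Filter.Tendsto W Filter.atTop (nhds 0)) :
    ∫⁻ ω, ENNReal.ofReal (W (ξ ω)) ∂P
      = ∫⁻ y in Set.Ioi (0:ℝ),
          ENNReal.ofReal ((-1 : ℝ) ^ n * d n y
            * iterCdf (fun t => (P {ω | ξ ω ≤ t}).toReal) (n - 1) y) := by
  let c : ℕ → ℝ → ℝ := fun k y => (-1) ^ k * d k y
  have hc : ∀ k < n, ∀ y > (0:ℝ), HasDerivAt (c k) (-c (k + 1) y) y := fun k hk y hy => by
    simpa [c, pow_succ] using (hderiv k hk y hy).const_mul ((-1 : ℝ) ^ k)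
  have hc0 : c 0 = W := by simp [c, hd0]
  -- `d n` is arbitrary off `(0, ∞)`; on `(0, ∞)` it is a derivative, hence measurable.
  let G : ℝ → ℝ≥0∞ := fun z => ENNReal.ofReal ((Ioi 0).indicator (c n) z)
  have hG : Measurable G := ENNReal.measurable_ofReal.comp <|
    measurable_indicator_of_hasDerivAt (f := -c (n - 1)) measurableSet_Ioi fun y hy => by
      simpa [Nat.sub_add_cancel (by omega : 1 ≤ n)] using (hc (n - 1) (by omega) y hy).neg
  have hGc : ∀ z > (0:ℝ), G z = ENNReal.ofReal (c n z) := fun z hz => by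
    simp [G, indicator_of_mem (mem_Ioi.2 hz)]
  have hWpos : ∀ x > (0:ℝ), ENNReal.ofReal (W x) = iterTailIntegral G (n - 1) x := fun x hx =>
    hc0 ▸ ofReal_eq_iterTailIntegral hc hsign (hc0 ▸ hWinf) hG hGc (by omega) hx
  have hWzero : ENNReal.ofReal (W 0) = iterTailIntegral G (n - 1) 0 :=
    eq_iterTailIntegral_of_tendsto_nhdsGT (f := fun x => ENNReal.ofReal (W x)) hG (n - 1)
      (ENNReal.tendsto_ofReal hW0) hWpos
  calc ∫⁻ ω, ENNReal.ofReal (W (ξ ω)) ∂P = ∫⁻ ω, iterTailIntegral G (n - 1) (ξ ω) ∂P :=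
        lintegral_congr fun ω => (hξ0 ω).eq_or_lt.elim (fun h => h ▸ hWzero) (hWpos _)
    _ = ∫⁻ z in Ici 0, ENNReal.ofReal (iterCdf _ (n - 1) z) * G z :=
        lintegral_iterTailIntegral_eq_setLIntegral_iterCdf P hξm hξ0 hG (n - 1)
    _ = _ := by
        rw [setLIntegral_congr Ioi_ae_eq_Ici.symm]
        refine setLIntegral_congr_fun measurableSet_Ioi fun z hz => ?_
        rw [hGc z hz, mul_comm, ← ENNReal.ofReal_mul (hsign n (by omega) le_rfl z hz)]

/-- Fix `n ≥ 2`, let `ξ ≥ 0` be a random variable with cdf `F`, and let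
`W ∈ 𝒟(n)` (with pointwise derivatives `d 1, …, d n` on `(0,∞)`, `(−1)^k W^(k) ≥ 0` for
`k = 1, …, n`, `W'(∞) = 0`, and `W` extended to `0` by its right limit) be bounded from
below with `W(y) → 0` as `y → ∞`.  Then
`E[W(ξ)] = ∫₀^∞ (−1)^n W^{(n)}(y) F_n(y) dy`, both sides valued in `[0, ∞]`. -/
theorem stmt1 {Ω : Type*} [MeasurableSpace Ω] (P : Measure Ω) [IsProbabilityMeasure P]
    (ξ : Ω → ℝ) (hξm : Measurable ξ) (hξ0 : ∀ ω, 0 ≤ ξ ω)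
    (n : ℕ) (hn : 2 ≤ n)
    (W : ℝ → ℝ) (d : ℕ → ℝ → ℝ)
    (hd0 : d 0 = W)
    (hderiv : ∀ k < n, ∀ y > (0:ℝ), HasDerivAt (d k) (d (k + 1) y) y)
    (hsign : ∀ k, 1 ≤ k → k ≤ n → ∀ y > (0:ℝ), 0 ≤ (-1 : ℝ) ^ k * d k y)
    (hlim : Filter.Tendsto (d 1) Filter.atTop (nhds 0))
    (hW0 : Filter.Tendsto W (nhdsWithin 0 (Set.Ioi 0)) (nhds (W 0)))
    (hbdd : ∃ m : ℝ, ∀ y > (0:ℝ), m ≤ W y)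
    (hWinf : Filter.Tendsto W Filter.atTop (nhds 0)) :
    ∫⁻ ω, ENNReal.ofReal (W (ξ ω)) ∂P
      = ∫⁻ y in Set.Ioi (0:ℝ),
          ENNReal.ofReal ((-1 : ℝ) ^ n * d n y
            * iterCdf (fun t => (P {ω | ξ ω ≤ t}).toReal) (n - 1) y) :=
  stmt1_general P ξ hξm hξ0 n hn W d hd0 hderiv hsign hW0 hWinf
end

section
/- Fix an integer n ≥ 1 and let ξ and η be nonnegative random variables. If ξ ⪰_n η, then ξ ⪰_∞ η; that is, if F_{ξ,n}(y) ≤ F_{η,n}(y) for all y ≥ 0, then E[e^{−zξ}] ≤ E[e^{−zη}] for every z > 0. -/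
/-!
For a measure `μ` on `[0, ∞)`, writing `e^{-zt} = z ∫_{y ≥ t} e^{-zy} dy` and applying Tonelli
gives `∫ e^{-zt} dμ(t) = z ∫₀^∞ e^{-zy} μ[0, y] dy`. For the law of `ξ` this reads
`E[e^{-zξ}] = z ∫₀^∞ e^{-zy} F_1(y) dy`, and for the measure `F_i(t) dt` it reads
`∫₀^∞ e^{-zy} F_i(y) dy = z ∫₀^∞ e^{-zy} F_{i+1}(y) dy`. Hence
`E[e^{-zξ}] = z^n ∫₀^∞ e^{-zy} F_n(y) dy`, which is monotone in `F_n`. Working in `ℝ≥0∞`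
avoids all integrability side conditions.
-/

open MeasureTheory Filter Set Topology ENNReal

section iterCdf

variable {F : ℝ → ℝ}

lemma iterCdf_intervalIntegrable (hF : Monotone F) (i : ℕ) (a b : ℝ) :
    IntervalIntegrable (iterCdf F i) volume a b := by
  induction i generalizing a b with
  | zero => exact hF.intervalIntegrable
  | succ i ih => exact (intervalIntegral.continuous_primitive ih 0).intervalIntegrable a b

lemma measurable_iterCdf (hF : Monotone F) : ∀ i, Measurable (iterCdf F i)
  | 0 => hF.measurable
  | i + 1 => (intervalIntegral.continuous_primitive (iterCdf_intervalIntegrable hF i) 0).measurable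

lemma iterCdf_nonneg (hF₀ : ∀ t, 0 ≤ F t) (i : ℕ) {y : ℝ} (hy : 0 ≤ y) :
    0 ≤ iterCdf F i y := by
  induction i generalizing y with
  | zero => exact hF₀ y
  | succ i ih => exact intervalIntegral.integral_nonneg hy fun t ht => ih ht.1

lemma ofReal_iterCdf_succ (hF : Monotone F) (hF₀ : ∀ t, 0 ≤ F t) (i : ℕ) {y : ℝ}
    (hy : 0 ≤ y) :
    ENNReal.ofReal (iterCdf F (i + 1) y) = ∫⁻ t in Ioc 0 y, ENNReal.ofReal (iterCdf F i t) := by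
  change ENNReal.ofReal (∫ t in (0:ℝ)..y, iterCdf F i t) = _
  rw [intervalIntegral.integral_of_le hy]
  exact ofReal_integral_eq_lintegral_ofReal (iterCdf_intervalIntegrable hF i 0 y).1
    ((ae_restrict_iff' measurableSet_Ioc).2
      (ae_of_all _ fun t ht => iterCdf_nonneg hF₀ i ht.1.le))

end iterCdf

section Laplace

variable {z : ℝ}

lemma measurable_ofReal_exp_neg_mul :
    Measurable fun y => ENNReal.ofReal (Real.exp (-(z * y))) := by
  fun_prop

lemma lintegral_exp_neg_mul_Ioi (hz : 0 < z) (t : ℝ) :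
    ∫⁻ y in Ioi t, ENNReal.ofReal (Real.exp (-(z * y)))
      = ENNReal.ofReal (Real.exp (-(z * t)) / z) := by
  have h := integral_exp_mul_Ioi (neg_lt_zero.2 hz) t
  simp only [neg_mul, neg_div_neg_eq] at h
  have hi := integrableOn_exp_mul_Ioi (neg_lt_zero.2 hz) t
  simp only [neg_mul] at hi
  rw [← h, ofReal_integral_eq_lintegral_ofReal hi (ae_of_all _ fun y => (Real.exp_pos _).le)]

theorem lintegral_exp_neg_mul_eq_mul_lintegral_measure_Iic {μ : Measure ℝ} [SFinite μ]
    (hμ : ∀ᵐ t ∂μ, 0 ≤ t) (hz : 0 < z) :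
    ∫⁻ t, ENNReal.ofReal (Real.exp (-(z * t))) ∂μ
      = ENNReal.ofReal z *
          ∫⁻ y in Ioi 0, ENNReal.ofReal (Real.exp (-(z * y))) * μ (Iic y) := by
  set g : ℝ → ℝ≥0∞ := fun y => ENNReal.ofReal (Real.exp (-(z * y)))
  have hg : Measurable g := measurable_ofReal_exp_neg_mul
  have tail : ∀ t, 0 ≤ t → g t = ENNReal.ofReal z * ∫⁻ y in Ioi 0, (Ici t).indicator g y := by
    intro t ht
    have hset : (Ici t ∩ Ioi 0 : Set ℝ) =ᵐ[volume] Ioi t := by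
      simpa only [Ioi_inter_Ioi, max_eq_left ht] using
        (Ioi_ae_eq_Ici (a := t)).symm.inter (ae_eq_refl (Ioi (0:ℝ)))
    rw [lintegral_indicator measurableSet_Ici, Measure.restrict_restrict measurableSet_Ici,
      Measure.restrict_congr_set hset, lintegral_exp_neg_mul_Ioi hz,
      ← ENNReal.ofReal_mul hz.le, mul_div_cancel₀ _ hz.ne']
  have hmeas : Measurable (Function.uncurry fun t y => (Ici t).indicator g y) := by
    change Measurable ({p : ℝ × ℝ | p.1 ≤ p.2}.indicator fun p => g p.2)
    exact (hg.comp measurable_snd).indicator (measurableSet_le measurable_fst measurable_snd)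
  calc ∫⁻ t, g t ∂μ
      = ∫⁻ t, ENNReal.ofReal z * (∫⁻ y in Ioi 0, (Ici t).indicator g y) ∂μ :=
        lintegral_congr_ae (hμ.mono tail)
    _ = ENNReal.ofReal z * ∫⁻ y in Ioi 0, ∫⁻ t, (Ici t).indicator g y ∂μ := by
        rw [lintegral_const_mul' _ _ ofReal_ne_top, lintegral_lintegral_swap hmeas.aemeasurable]
    _ = ENNReal.ofReal z * ∫⁻ y in Ioi 0, g y * μ (Iic y) := by
        congr 1
        refine lintegral_congr fun y => ?_
        rw [← lintegral_indicator_const measurableSet_Iic]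
        rfl

theorem lintegral_exp_neg_mul_comp_eq_measure_le {Ω : Type*} [MeasurableSpace Ω]
    {P : Measure Ω} [SFinite P] {ξ : Ω → ℝ} (hξ : Measurable ξ) (hξ₀ : ∀ ω, 0 ≤ ξ ω) (hz : 0 < z) :
    ∫⁻ ω, ENNReal.ofReal (Real.exp (-(z * ξ ω))) ∂P
      = ENNReal.ofReal z *
          ∫⁻ y in Ioi 0, ENNReal.ofReal (Real.exp (-(z * y))) * P {ω | ξ ω ≤ y} := by
  have hμ : ∀ᵐ t ∂P.map ξ, 0 ≤ t :=
    (ae_map_iff hξ.aemeasurable measurableSet_Ici).2 (ae_of_all _ hξ₀)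
  rw [← lintegral_map measurable_ofReal_exp_neg_mul hξ,
    lintegral_exp_neg_mul_eq_mul_lintegral_measure_Iic hμ hz]
  simp_rw [Measure.map_apply hξ measurableSet_Iic]
  rfl

theorem lintegral_exp_neg_mul_iterCdf_succ {F : ℝ → ℝ} (hF : Monotone F) (hF₀ : ∀ t, 0 ≤ F t)
    (hz : 0 < z) (i : ℕ) :
    ∫⁻ y in Ioi 0, ENNReal.ofReal (Real.exp (-(z * y))) * ENNReal.ofReal (iterCdf F i y)
      = ENNReal.ofReal z * ∫⁻ y in Ioi 0,
          ENNReal.ofReal (Real.exp (-(z * y))) * ENNReal.ofReal (iterCdf F (i + 1) y) := by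
  set μ := (volume.restrict (Ioi (0:ℝ))).withDensity fun t => ENNReal.ofReal (iterCdf F i t)
  have hμ : ∀ᵐ t ∂μ, 0 ≤ t := (withDensity_absolutelyContinuous _ _).ae_le
    ((ae_restrict_iff' measurableSet_Ioi).2 (ae_of_all _ fun t ht => le_of_lt ht))
  have hμ_Iic : ∀ y ∈ Ioi (0:ℝ), μ (Iic y) = ENNReal.ofReal (iterCdf F (i + 1) y) := by
    intro y hy
    rw [withDensity_apply _ measurableSet_Iic, Measure.restrict_restrict measurableSet_Iic,
      inter_comm, Ioi_inter_Iic, ofReal_iterCdf_succ hF hF₀ i (le_of_lt hy)]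
  calc ∫⁻ y in Ioi 0, ENNReal.ofReal (Real.exp (-(z * y))) * ENNReal.ofReal (iterCdf F i y)
      = ∫⁻ t, ENNReal.ofReal (Real.exp (-(z * t))) ∂μ := by
        rw [lintegral_withDensity_eq_lintegral_mul _ (measurable_iterCdf hF i).ennreal_ofReal
          measurable_ofReal_exp_neg_mul]
        simp only [Pi.mul_apply, mul_comm]
    _ = ENNReal.ofReal z *
          ∫⁻ y in Ioi 0, ENNReal.ofReal (Real.exp (-(z * y))) * μ (Iic y) :=
        lintegral_exp_neg_mul_eq_mul_lintegral_measure_Iic hμ hz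
    _ = _ := by
        rw [setLIntegral_congr_fun measurableSet_Ioi fun y hy => by rw [hμ_Iic y hy]]

theorem lintegral_exp_neg_mul_iterCdf_zero_eq_pow_mul {F : ℝ → ℝ} (hF : Monotone F)
    (hF₀ : ∀ t, 0 ≤ F t) (hz : 0 < z) (m : ℕ) :
    ∫⁻ y in Ioi 0, ENNReal.ofReal (Real.exp (-(z * y))) * ENNReal.ofReal (iterCdf F 0 y)
      = ENNReal.ofReal z ^ m * ∫⁻ y in Ioi 0,
          ENNReal.ofReal (Real.exp (-(z * y))) * ENNReal.ofReal (iterCdf F m y) := by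
  induction m with
  | zero => rw [pow_zero, one_mul]
  | succ m ih =>
    rw [ih, lintegral_exp_neg_mul_iterCdf_succ hF hF₀ hz m, pow_succ, mul_assoc]

theorem lintegral_exp_neg_mul_comp_eq_iterCdf {Ω : Type*} [MeasurableSpace Ω] {P : Measure Ω}
    [IsFiniteMeasure P] {ξ : Ω → ℝ} (hξ : Measurable ξ) (hξ₀ : ∀ ω, 0 ≤ ξ ω) (hz : 0 < z)
    (m : ℕ) :
    ∫⁻ ω, ENNReal.ofReal (Real.exp (-(z * ξ ω))) ∂P
      = ENNReal.ofReal z ^ (m + 1) * ∫⁻ y in Ioi 0, ENNReal.ofReal (Real.exp (-(z * y))) *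
          ENNReal.ofReal (iterCdf (fun t => (P {ω | ξ ω ≤ t}).toReal) m y) := by
  have hF : Monotone fun t => (P {ω | ξ ω ≤ t}).toReal := fun a b hab =>
    ENNReal.toReal_mono (measure_ne_top P _) (measure_mono fun ω hω => le_trans hω hab)
  rw [pow_succ', mul_assoc,
    ← lintegral_exp_neg_mul_iterCdf_zero_eq_pow_mul hF (fun _ => toReal_nonneg) hz,
    lintegral_exp_neg_mul_comp_eq_measure_le hξ hξ₀ hz]
  simp only [iterCdf, ofReal_toReal (measure_ne_top P _)]

end Laplace

lemma integral_le_integral_of_lintegral_ofReal_le {α : Type*} [MeasurableSpace α]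
    {μ : Measure α} {f g : α → ℝ} (hf₀ : 0 ≤ᵐ[μ] f) (hg₀ : 0 ≤ᵐ[μ] g)
    (hf : AEStronglyMeasurable f μ) (hg : Integrable g μ)
    (h : ∫⁻ a, ENNReal.ofReal (f a) ∂μ ≤ ∫⁻ a, ENNReal.ofReal (g a) ∂μ) :
    ∫ a, f a ∂μ ≤ ∫ a, g a ∂μ := by
  rw [integral_eq_lintegral_of_nonneg_ae hf₀ hf,
    integral_eq_lintegral_of_nonneg_ae hg₀ hg.aestronglyMeasurable]
  exact ENNReal.toReal_mono hg.lintegral_lt_top.ne h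

lemma integrable_exp_neg_mul {Ω : Type*} [MeasurableSpace Ω] {P : Measure Ω} [IsFiniteMeasure P]
    {η : Ω → ℝ} (hη : Measurable η) (hη₀ : ∀ ω, 0 ≤ η ω) {z : ℝ} (hz : 0 < z) :
    Integrable (fun ω => Real.exp (-(z * η ω))) P :=
  (integrable_const 1).mono' (by fun_prop) (ae_of_all _ fun ω => by
    rw [Real.norm_eq_abs, Real.abs_exp, Real.exp_le_one_iff, neg_nonpos]
    exact mul_nonneg hz.le (hη₀ ω))

theorem stmt4_general {Ω : Type*} [MeasurableSpace Ω] (P : Measure Ω) [IsProbabilityMeasure P]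
    (ξ η : Ω → ℝ) (hξm : Measurable ξ) (hηm : Measurable η)
    (hξ0 : ∀ ω, 0 ≤ ξ ω) (hη0 : ∀ ω, 0 ≤ η ω)
    (n : ℕ)
    (hdom : ∀ y ≥ (0:ℝ),
      iterCdf (fun t => (P {ω | ξ ω ≤ t}).toReal) (n - 1) y
        ≤ iterCdf (fun t => (P {ω | η ω ≤ t}).toReal) (n - 1) y) :
    ∀ z > (0:ℝ),
      ∫ ω, Real.exp (-(z * ξ ω)) ∂P ≤ ∫ ω, Real.exp (-(z * η ω)) ∂P := by
  intro z hz
  refine integral_le_integral_of_lintegral_ofReal_le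
    (ae_of_all _ fun _ => (Real.exp_pos _).le) (ae_of_all _ fun _ => (Real.exp_pos _).le)
    (by fun_prop) (integrable_exp_neg_mul hηm hη0 hz) ?_
  rw [lintegral_exp_neg_mul_comp_eq_iterCdf hξm hξ0 hz (n - 1),
    lintegral_exp_neg_mul_comp_eq_iterCdf hηm hη0 hz (n - 1)]
  exact mul_le_mul_right (setLIntegral_mono' measurableSet_Ioi fun y hy =>
    mul_le_mul_right (ENNReal.ofReal_le_ofReal (hdom y (le_of_lt hy))) _) _

/-- Fix `n ≥ 1` and nonnegative random variables `ξ, η`.  If `ξ ⪰ₙ η`,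
i.e. `F_{ξ,n}(y) ≤ F_{η,n}(y)` for all `y ≥ 0`, then `ξ ⪰_∞ η`, i.e.
`E[e^{−zξ}] ≤ E[e^{−zη}]` for every `z > 0`. -/
theorem stmt4 {Ω : Type*} [MeasurableSpace Ω] (P : Measure Ω) [IsProbabilityMeasure P]
    (ξ η : Ω → ℝ) (hξm : Measurable ξ) (hηm : Measurable η)
    (hξ0 : ∀ ω, 0 ≤ ξ ω) (hη0 : ∀ ω, 0 ≤ η ω)
    (n : ℕ) (hn : 1 ≤ n)
    (hdom : ∀ y ≥ (0:ℝ),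
      iterCdf (fun t => (P {ω | ξ ω ≤ t}).toReal) (n - 1) y
        ≤ iterCdf (fun t => (P {ω | η ω ≤ t}).toReal) (n - 1) y) :
    ∀ z > (0:ℝ),
      ∫ ω, Real.exp (-(z * ξ ω)) ∂P ≤ ∫ ω, Real.exp (-(z * η ω)) ∂P :=
  stmt4_general P ξ η hξm hηm hξ0 hη0 n hdom
end

section
/- Let (Ω, F, P) be a probability space, Ŷ : Ω → (0,∞) a random variable, and μ a nonnegative sigma-finite Borel measure on (0,∞) with μ((0,∞)) > 0. Let V : (0,∞) → ℝ be differentiable with V′(y) = −∫_{(0,∞)} e^{−yz} dμ(z) ∈ (−∞, 0) for every y > 0. Define v(y) := E[V(yŶ)] and assume that E[|V(yŶ)|] < ∞ and E[Ŷ ∫_{(0,∞)} e^{−yŶz} dμ(dz)] < ∞ for every y > 0. Then v is infinitely differentiable on (0,∞) and, for every integer n ≥ 1 and every y > 0, (−1)^n v^(n)(y) = (−1)^n E[V^(n)(yŶ) Ŷ^n] = E[∫_{(0,∞)} e^{−zyŶ} z^{n−1} Ŷ^n dμ(z)] ∈ (0, ∞). In particular, −v′ is completely monotonic on (0,∞).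 -/
/-!
Differentiating the Bernstein representation, the derivatives of `V` are
`V⁽ⁿ⁺¹⁾(t) = (-1)ⁿ⁺¹ ∫ e^{-tz} zⁿ dμ(z)`. The bound `e^{-tz} zⁿ ≤ n! (2/t)ⁿ e^{-tz/2}` makes
these moments finite and dominates the `n`-th one by the zeroth one at `t/2`. Hence
`V⁽ⁿ⁾(yŶ) Ŷⁿ` is dominated, uniformly for `y` near `y₀`, by a multiple of
`Ŷ ∫ e^{-y₀Ŷz/4} dμ(z)`, which is integrable by hypothesis, so `E` may be differentiated
under the integral sign at every order.
-/

open MeasureTheory Filter Set Topology ENNReal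

open Real Nat

noncomputable def laplaceMoment (μ : Measure ℝ) (n : ℕ) (t : ℝ) : ℝ :=
  ∫ z in Ioi 0, rexp (-(t * z)) * z ^ n ∂μ

theorem exp_neg_mul_mul_pow_le (n : ℕ) {t z : ℝ} (ht : 0 < t) (hz : 0 ≤ z) :
    rexp (-(t * z)) * z ^ n ≤ n ! * (2 / t) ^ n * rexp (-(t / 2 * z)) := by
  have hpow : (t / 2 * z) ^ n ≤ rexp (t / 2 * z) * n ! :=
    (div_le_iff₀ (by positivity)).1 (pow_div_factorial_le_exp _ (by positivity) n)
  calc rexp (-(t * z)) * z ^ n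
      = rexp (-(t * z)) * ((2 / t) ^ n * (t / 2 * z) ^ n) := by
        rw [← mul_pow]; field_simp
    _ ≤ rexp (-(t * z)) * ((2 / t) ^ n * (rexp (t / 2 * z) * n !)) := by gcongr
    _ = n ! * (2 / t) ^ n * (rexp (-(t * z)) * rexp (t / 2 * z)) := by ring
    _ = n ! * (2 / t) ^ n * rexp (-(t / 2 * z)) := by rw [← exp_add]; ring_nf

section LaplaceMoment

variable {μ : Measure ℝ}

theorem integrableOn_exp_neg_mul_mul_pow
    (hμ : ∀ t > 0, IntegrableOn (fun z => rexp (-(t * z))) (Ioi 0) μ) (n : ℕ) {t : ℝ}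
    (ht : 0 < t) : IntegrableOn (fun z => rexp (-(t * z)) * z ^ n) (Ioi 0) μ := by
  refine ((hμ (t / 2) (half_pos ht)).const_mul (n ! * (2 / t) ^ n)).mono'
    (by fun_prop : Continuous fun z => rexp (-(t * z)) * z ^ n).aestronglyMeasurable
    ((ae_restrict_mem measurableSet_Ioi).mono fun z (hz : 0 < z) => ?_)
  rw [norm_of_nonneg (by positivity)]
  exact exp_neg_mul_mul_pow_le n ht hz.le

theorem laplaceMoment_nonneg (n : ℕ) (t : ℝ) : 0 ≤ laplaceMoment μ n t :=
  setIntegral_nonneg measurableSet_Ioi fun z (hz : 0 < z) => by positivity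

theorem laplaceMoment_pos (hμ : ∀ t > 0, IntegrableOn (fun z => rexp (-(t * z))) (Ioi 0) μ)
    (hμ₀ : μ (Ioi 0) ≠ 0) (n : ℕ) {t : ℝ} (ht : 0 < t) : 0 < laplaceMoment μ n t := by
  rw [laplaceMoment, setIntegral_pos_iff_support_of_nonneg_ae
    ((ae_restrict_mem measurableSet_Ioi).mono fun z (hz : 0 < z) => by positivity)
    (integrableOn_exp_neg_mul_mul_pow hμ n ht)]
  have hsupp : Function.support (fun z => rexp (-(t * z)) * z ^ n) ∩ Ioi 0 = Ioi 0 :=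
    inter_eq_right.2 fun z (hz : 0 < z) => by simp only [Function.mem_support]; positivity
  rw [hsupp]
  exact pos_iff_ne_zero.2 hμ₀

theorem laplaceMoment_antitoneOn
    (hμ : ∀ t > 0, IntegrableOn (fun z => rexp (-(t * z))) (Ioi 0) μ) (n : ℕ) :
    AntitoneOn (laplaceMoment μ n) (Ioi 0) := fun s (hs : 0 < s) t (ht : 0 < t) hst =>
  setIntegral_mono_on (integrableOn_exp_neg_mul_mul_pow hμ n ht)
    (integrableOn_exp_neg_mul_mul_pow hμ n hs) measurableSet_Ioi fun z (hz : 0 < z) => by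
      gcongr

theorem laplaceMoment_le (hμ : ∀ t > 0, IntegrableOn (fun z => rexp (-(t * z))) (Ioi 0) μ)
    (n : ℕ) {t : ℝ} (ht : 0 < t) :
    laplaceMoment μ n t ≤ n ! * (2 / t) ^ n * laplaceMoment μ 0 (t / 2) := by
  rw [laplaceMoment, laplaceMoment, ← integral_const_mul]
  refine setIntegral_mono_on (integrableOn_exp_neg_mul_mul_pow hμ n ht)
    ((integrableOn_exp_neg_mul_mul_pow hμ 0 (half_pos ht)).const_mul _) measurableSet_Ioi
    fun z (hz : 0 < z) => ?_
  simpa using exp_neg_mul_mul_pow_le n ht hz.le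

theorem hasDerivAt_laplaceMoment
    (hμ : ∀ t > 0, IntegrableOn (fun z => rexp (-(t * z))) (Ioi 0) μ) (n : ℕ) {t : ℝ}
    (ht : 0 < t) : HasDerivAt (laplaceMoment μ n) (-laplaceMoment μ (n + 1) t) t := by
  rw [laplaceMoment, ← integral_neg]
  refine (hasDerivAt_integral_of_dominated_loc_of_deriv_le
    (F' := fun s z => -(rexp (-(s * z)) * z ^ (n + 1))) (Ioi_mem_nhds (half_lt_self ht))
    (Eventually.of_forall fun s => (by fun_prop : Continuous fun z =>
      rexp (-(s * z)) * z ^ n).aestronglyMeasurable)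
    (integrableOn_exp_neg_mul_mul_pow hμ n ht)
    (by fun_prop : Continuous fun z => -(rexp (-(t * z)) * z ^ (n + 1))).aestronglyMeasurable
    ?_ (integrableOn_exp_neg_mul_mul_pow hμ (n + 1) (half_pos ht)) ?_).2
  · refine (ae_restrict_mem measurableSet_Ioi).mono fun z (hz : 0 < z) s (hs : t / 2 < s) => ?_
    rw [norm_neg, norm_of_nonneg (by positivity)]
    gcongr
  · refine Eventually.of_forall fun z s _ => ?_
    have h : HasDerivAt (fun s => rexp (-(s * z)) * z ^ n) (rexp (-(s * z)) * -z * z ^ n) s :=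
      ((hasDerivAt_mul_const z).neg.exp).mul_const _
    exact h.congr_deriv (by ring)

theorem laplaceMoment_zero (t : ℝ) :
    laplaceMoment μ 0 t = ∫ z in Ioi 0, rexp (-(t * z)) ∂μ := by
  simp only [laplaceMoment, pow_zero, mul_one]

theorem continuousOn_laplaceMoment
    (hμ : ∀ t > 0, IntegrableOn (fun z => rexp (-(t * z))) (Ioi 0) μ) (n : ℕ) :
    ContinuousOn (laplaceMoment μ n) (Ioi 0) := fun _ ht =>
  (hasDerivAt_laplaceMoment hμ n ht).continuousAt.continuousWithinAt

theorem laplaceMoment_mul_mul_pow_le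
    (hμ : ∀ t > 0, IntegrableOn (fun z => rexp (-(t * z))) (Ioi 0) μ) (n : ℕ) {c w : ℝ}
    (hc : 0 < c) (hw : 0 < w) :
    laplaceMoment μ n (c * w) * w ^ (n + 1) ≤
      n ! * (2 / c) ^ n * (laplaceMoment μ 0 (c / 2 * w) * w) := by
  calc laplaceMoment μ n (c * w) * w ^ (n + 1)
      ≤ n ! * (2 / (c * w)) ^ n * laplaceMoment μ 0 (c * w / 2) * w ^ (n + 1) := by
        gcongr; exact laplaceMoment_le hμ n (mul_pos hc hw)
    _ = n ! * (2 / c) ^ n * (laplaceMoment μ 0 (c / 2 * w) * w) := by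
        have hpow : (2 / (c * w)) ^ n * w ^ (n + 1) = (2 / c) ^ n * w := by
          rw [pow_succ, ← mul_assoc, ← mul_pow, show 2 / (c * w) * w = 2 / c by field_simp]
        rw [show c * w / 2 = c / 2 * w by ring, mul_right_comm, mul_assoc _ _ (w ^ (n + 1)),
          hpow]
        ring

end LaplaceMoment

section Expectation

variable {Ω : Type*} [MeasurableSpace Ω] {P : Measure Ω} {Y : Ω → ℝ}

theorem measurable_comp_const_mul_of_continuousOn {f : ℝ → ℝ} (hf : ContinuousOn f (Ioi 0))
    (hY : Measurable Y) (hYpos : ∀ ω, 0 < Y ω) {c : ℝ} (hc : 0 < c) :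
    Measurable fun ω => f (c * Y ω) :=
  (continuousOn_iff_continuous_domRestrict.1 hf).measurable.comp
    (f := fun ω => (⟨c * Y ω, mul_pos hc (hYpos ω)⟩ : Ioi (0 : ℝ)))
    (measurable_const.mul hY).subtype_mk

theorem integrable_laplaceMoment_comp_mul_mul_of_lintegral_lt_top {μ : Measure ℝ}
    (hμ : ∀ t > 0, IntegrableOn (fun z => rexp (-(t * z))) (Ioi 0) μ)
    (hY : Measurable Y) (hYpos : ∀ ω, 0 < Y ω) {c : ℝ} (hc : 0 < c)
    (hfin : ∫⁻ ω, ENNReal.ofReal (Y ω)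
        * (∫⁻ z in Ioi 0, ENNReal.ofReal (rexp (-(c * Y ω * z))) ∂μ) ∂P < ⊤) :
    Integrable (fun ω => laplaceMoment μ 0 (c * Y ω) * Y ω) P := by
  have hmeas : Measurable fun ω => laplaceMoment μ 0 (c * Y ω) * Y ω :=
    (measurable_comp_const_mul_of_continuousOn (continuousOn_laplaceMoment hμ 0) hY hYpos hc).mul
      hY
  refine (lintegral_ofReal_ne_top_iff_integrable hmeas.aestronglyMeasurable
    (Eventually.of_forall fun ω => mul_nonneg (laplaceMoment_nonneg 0 _) (hYpos ω).le)).1 ?_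
  convert hfin.ne using 3 with ω
  rw [mul_comm, ENNReal.ofReal_mul (hYpos ω).le, laplaceMoment_zero,
    ofReal_integral_eq_lintegral_ofReal (hμ _ (mul_pos hc (hYpos ω)))
      (Eventually.of_forall fun z => (exp_pos _).le)]

theorem integrable_laplaceMoment_comp_mul_mul_pow {μ : Measure ℝ}
    (hμ : ∀ t > 0, IntegrableOn (fun z => rexp (-(t * z))) (Ioi 0) μ)
    (hY : Measurable Y) (hYpos : ∀ ω, 0 < Y ω)
    (h₀ : ∀ c > 0, Integrable (fun ω => laplaceMoment μ 0 (c * Y ω) * Y ω) P)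
    (n : ℕ) {c : ℝ} (hc : 0 < c) :
    Integrable (fun ω => laplaceMoment μ n (c * Y ω) * Y ω ^ (n + 1)) P := by
  refine ((h₀ (c / 2) (half_pos hc)).const_mul (n ! * (2 / c) ^ n)).mono'
    ((measurable_comp_const_mul_of_continuousOn (continuousOn_laplaceMoment hμ n) hY hYpos
      hc).mul (hY.pow_const _)).aestronglyMeasurable (Eventually.of_forall fun ω => ?_)
  rw [norm_of_nonneg (mul_nonneg (laplaceMoment_nonneg n _) (pow_nonneg (hYpos ω).le _))]
  exact laplaceMoment_mul_mul_pow_le hμ n hc (hYpos ω)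

theorem integral_laplaceMoment_comp_mul_mul_pow_pos {μ : Measure ℝ} [NeZero P]
    (hμ : ∀ t > 0, IntegrableOn (fun z => rexp (-(t * z))) (Ioi 0) μ)
    (hμ₀ : μ (Ioi 0) ≠ 0) (hY : Measurable Y) (hYpos : ∀ ω, 0 < Y ω)
    (h₀ : ∀ c > 0, Integrable (fun ω => laplaceMoment μ 0 (c * Y ω) * Y ω) P)
    (n : ℕ) {c : ℝ} (hc : 0 < c) :
    0 < ∫ ω, laplaceMoment μ n (c * Y ω) * Y ω ^ (n + 1) ∂P := by
  rw [integral_pos_iff_support_of_nonneg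
    (fun ω => mul_nonneg (laplaceMoment_nonneg n _) (pow_nonneg (hYpos ω).le _))
    (integrable_laplaceMoment_comp_mul_mul_pow hμ hY hYpos h₀ n hc)]
  have hsupp : Function.support (fun ω => laplaceMoment μ n (c * Y ω) * Y ω ^ (n + 1)) = univ :=
    eq_univ_of_forall fun ω => (mul_pos (laplaceMoment_pos hμ hμ₀ n (mul_pos hc (hYpos ω)))
      (pow_pos (hYpos ω) _)).ne'
  rw [hsupp]
  exact Measure.measure_univ_pos.2 (NeZero.ne P)

theorem hasDerivAt_integral_comp_mul_mul_pow {g g' : ℝ → ℝ} {k : ℕ}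
    (hY : Measurable Y) (hYpos : ∀ ω, 0 < Y ω)
    (hg : ∀ t > 0, HasDerivAt g (g' t) t) (hg' : AntitoneOn (fun t => |g' t|) (Ioi 0))
    (hg'_int : ∀ c > 0, Integrable (fun ω => g' (c * Y ω) * Y ω ^ (k + 1)) P)
    {y : ℝ} (hy : 0 < y) (hg_int : Integrable (fun ω => g (y * Y ω) * Y ω ^ k) P) :
    HasDerivAt (fun x => ∫ ω, g (x * Y ω) * Y ω ^ k ∂P)
      (∫ ω, g' (y * Y ω) * Y ω ^ (k + 1) ∂P) y := by
  have hgc : ContinuousOn g (Ioi 0) := fun t ht => (hg t ht).continuousAt.continuousWithinAt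
  refine (hasDerivAt_integral_of_dominated_loc_of_deriv_le
    (F' := fun x ω => g' (x * Y ω) * Y ω ^ (k + 1)) (Ioi_mem_nhds (half_lt_self hy))
    ((eventually_gt_nhds hy).mono fun x hx =>
      ((measurable_comp_const_mul_of_continuousOn hgc hY hYpos hx).mul
        (hY.pow_const _)).aestronglyMeasurable)
    hg_int (hg'_int y hy).aestronglyMeasurable ?_ (hg'_int (y / 2) (half_pos hy)).norm ?_).2
  · refine Eventually.of_forall fun ω x (hx : y / 2 < x) => ?_
    have hYω := hYpos ω
    rw [norm_mul, norm_mul, norm_pow, Real.norm_eq_abs, Real.norm_eq_abs, abs_of_pos hYω]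
    gcongr
    exact hg' (mul_pos (half_pos hy) hYω) (mul_pos (by linarith) hYω) (by gcongr)
  · refine Eventually.of_forall fun ω x (hx : y / 2 < x) => ?_
    have hx₀ : 0 < x * Y ω := mul_pos (by linarith) (hYpos ω)
    exact (((hg _ hx₀).comp x (hasDerivAt_mul_const (Y ω))).mul_const _).congr_deriv (by ring)

end Expectation

noncomputable def bernsteinDeriv (μ : Measure ℝ) (V : ℝ → ℝ) : ℕ → ℝ → ℝ
  | 0 => V
  | n + 1 => fun t => (-1) ^ (n + 1) * laplaceMoment μ n t

section BernsteinDeriv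

variable {μ : Measure ℝ} {V : ℝ → ℝ}

theorem neg_one_pow_mul_bernsteinDeriv_succ (n : ℕ) (t : ℝ) :
    (-1) ^ (n + 1) * bernsteinDeriv μ V (n + 1) t = laplaceMoment μ n t := by
  rw [bernsteinDeriv, ← mul_assoc, ← pow_add, Even.neg_one_pow ⟨n + 1, rfl⟩, one_mul]

theorem abs_bernsteinDeriv_succ (n : ℕ) (t : ℝ) :
    |bernsteinDeriv μ V (n + 1) t| = laplaceMoment μ n t := by
  rw [bernsteinDeriv, abs_mul, abs_pow, abs_neg, abs_one, one_pow, one_mul,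
    abs_of_nonneg (laplaceMoment_nonneg n t)]

theorem hasDerivAt_bernsteinDeriv
    (hμ : ∀ t > 0, IntegrableOn (fun z => rexp (-(t * z))) (Ioi 0) μ)
    (hV' : ∀ t > 0, HasDerivAt V (-∫ z in Ioi 0, rexp (-(t * z)) ∂μ) t)
    (k : ℕ) {t : ℝ} (ht : 0 < t) :
    HasDerivAt (bernsteinDeriv μ V k) (bernsteinDeriv μ V (k + 1) t) t := by
  cases k with
  | zero => simpa [bernsteinDeriv, laplaceMoment_zero] using hV' t ht
  | succ n =>
    exact ((hasDerivAt_laplaceMoment hμ n ht).const_mul _).congr_deriv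
      (by simp only [bernsteinDeriv]; ring)

theorem integrable_bernsteinDeriv_comp_mul_mul_pow {Ω : Type*} [MeasurableSpace Ω]
    {P : Measure Ω} {Y : Ω → ℝ}
    (hμ : ∀ t > 0, IntegrableOn (fun z => rexp (-(t * z))) (Ioi 0) μ)
    (hY : Measurable Y) (hYpos : ∀ ω, 0 < Y ω)
    (hV : ∀ c > 0, Integrable (fun ω => V (c * Y ω)) P)
    (h₀ : ∀ c > 0, Integrable (fun ω => laplaceMoment μ 0 (c * Y ω) * Y ω) P)
    (n : ℕ) {c : ℝ} (hc : 0 < c) :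
    Integrable (fun ω => bernsteinDeriv μ V n (c * Y ω) * Y ω ^ n) P := by
  cases n with
  | zero => simpa [bernsteinDeriv] using hV c hc
  | succ n =>
    simpa only [bernsteinDeriv, mul_assoc] using
      (integrable_laplaceMoment_comp_mul_mul_pow hμ hY hYpos h₀ n hc).const_mul ((-1) ^ (n + 1))

end BernsteinDeriv

theorem stmt9_general {Ω : Type*} [MeasurableSpace Ω] (P : Measure Ω) [IsProbabilityMeasure P]
    (Y : Ω → ℝ) (hYm : Measurable Y) (hYpos : ∀ ω, 0 < Y ω)
    (μ : Measure ℝ)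
    (hμne : μ (Set.Ioi 0) ≠ 0)
    (V : ℝ → ℝ)
    (hint : ∀ y > (0:ℝ),
      MeasureTheory.IntegrableOn (fun z => Real.exp (-(y * z))) (Set.Ioi 0) μ)
    (hV' : ∀ y > (0:ℝ),
      HasDerivAt V (-(∫ z in Set.Ioi (0:ℝ), Real.exp (-(y * z)) ∂μ)) y)
    (v : ℝ → ℝ) (hv : ∀ y : ℝ, v y = ∫ ω, V (y * Y ω) ∂P)
    (hVint : ∀ y > (0:ℝ), MeasureTheory.Integrable (fun ω => V (y * Y ω)) P)
    (hdom : ∀ y > (0:ℝ),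
      (∫⁻ ω, ENNReal.ofReal (Y ω)
        * (∫⁻ z in Set.Ioi (0:ℝ), ENNReal.ofReal (Real.exp (-(y * Y ω * z))) ∂μ) ∂P) < ⊤) :
    ∃ dv dV : ℕ → ℝ → ℝ, dv 0 = v ∧ dV 0 = V ∧
      (∀ k : ℕ, ∀ y > (0:ℝ), HasDerivAt (dv k) (dv (k + 1) y) y) ∧
      (∀ k : ℕ, ∀ y > (0:ℝ), HasDerivAt (dV k) (dV (k + 1) y) y) ∧
      (∀ n : ℕ, 1 ≤ n → ∀ y > (0:ℝ),
        MeasureTheory.Integrable (fun ω => dV n (y * Y ω) * Y ω ^ n) P ∧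
        (-1 : ℝ) ^ n * dv n y = (-1 : ℝ) ^ n * ∫ ω, dV n (y * Y ω) * Y ω ^ n ∂P ∧
        (-1 : ℝ) ^ n * dv n y
          = ∫ ω, (∫ z in Set.Ioi (0:ℝ),
              Real.exp (-(z * (y * Y ω))) * z ^ (n - 1) * Y ω ^ n ∂μ) ∂P ∧
        0 < (-1 : ℝ) ^ n * dv n y) := by
  set dV := bernsteinDeriv μ V
  have h₀ c (hc : 0 < c) := integrable_laplaceMoment_comp_mul_mul_of_lintegral_lt_top hint hYm
    hYpos hc (hdom c hc)
  have hdV_int := integrable_bernsteinDeriv_comp_mul_mul_pow hint hYm hYpos hVint h₀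
  refine ⟨fun n y => ∫ ω, dV n (y * Y ω) * Y ω ^ n ∂P, dV, ?_, rfl,
    fun k y hy => ?_, fun k y hy => hasDerivAt_bernsteinDeriv hint hV' k hy, ?_⟩
  · funext y
    simp [dV, bernsteinDeriv, hv]
  · refine hasDerivAt_integral_comp_mul_mul_pow hYm hYpos
      (fun t => hasDerivAt_bernsteinDeriv hint hV' k) ?_ (fun c hc => hdV_int (k + 1) hc) hy
      (hdV_int k hy)
    simpa only [abs_bernsteinDeriv_succ] using laplaceMoment_antitoneOn hint k
  rintro (_ | n) hn y hy
  · omega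
  have hsign : (-1) ^ (n + 1) * ∫ ω, dV (n + 1) (y * Y ω) * Y ω ^ (n + 1) ∂P
      = ∫ ω, laplaceMoment μ n (y * Y ω) * Y ω ^ (n + 1) ∂P := by
    simp only [← integral_const_mul, ← mul_assoc, dV, neg_one_pow_mul_bernsteinDeriv_succ]
  refine ⟨hdV_int (n + 1) hy, rfl, ?_, ?_⟩
  · rw [hsign]
    refine integral_congr_ae (Eventually.of_forall fun ω => ?_)
    simp only [laplaceMoment, ← integral_mul_const, Nat.add_sub_cancel, mul_comm _ (y * Y ω)]
  · rw [hsign]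
    exact integral_laplaceMoment_comp_mul_mul_pow_pos hint hμne hYm hYpos h₀ n hy

/-- Let `Ŷ > 0` be a random variable and `μ` a nonzero nonnegative
sigma-finite Borel measure on `(0,∞)`.  Let `V` be differentiable on `(0,∞)` with
`V'(y) = −∫_{(0,∞)} e^{−yz} dμ(z) ∈ (−∞,0)`.  Set `v(y) = E[V(yŶ)]` and assume
`E[|V(yŶ)|] < ∞` and `E[Ŷ ∫ e^{−yŶz} dμ(z)] < ∞` for every `y > 0`.  Then `v` and `V`
have derivatives of all orders on `(0,∞)` and for every `n ≥ 1`, `y > 0`: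
`(−1)ⁿ v⁽ⁿ⁾(y) = (−1)ⁿ E[V⁽ⁿ⁾(yŶ) Ŷⁿ] = E[∫ e^{−zyŶ} z^{n−1} Ŷⁿ dμ(z)] ∈ (0,∞)`;
in particular `−v'` is completely monotonic on `(0,∞)`. -/
theorem stmt9 {Ω : Type*} [MeasurableSpace Ω] (P : Measure Ω) [IsProbabilityMeasure P]
    (Y : Ω → ℝ) (hYm : Measurable Y) (hYpos : ∀ ω, 0 < Y ω)
    (μ : Measure ℝ) [SigmaFinite μ] (hsupp : μ (Set.Iic 0) = 0)
    (hμne : μ (Set.Ioi 0) ≠ 0)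
    (V : ℝ → ℝ)
    (hint : ∀ y > (0:ℝ),
      MeasureTheory.IntegrableOn (fun z => Real.exp (-(y * z))) (Set.Ioi 0) μ)
    (hV' : ∀ y > (0:ℝ),
      HasDerivAt V (-(∫ z in Set.Ioi (0:ℝ), Real.exp (-(y * z)) ∂μ)) y)
    (v : ℝ → ℝ) (hv : ∀ y : ℝ, v y = ∫ ω, V (y * Y ω) ∂P)
    (hVint : ∀ y > (0:ℝ), MeasureTheory.Integrable (fun ω => V (y * Y ω)) P)
    (hdom : ∀ y > (0:ℝ),
      (∫⁻ ω, ENNReal.ofReal (Y ω)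
        * (∫⁻ z in Set.Ioi (0:ℝ), ENNReal.ofReal (Real.exp (-(y * Y ω * z))) ∂μ) ∂P) < ⊤) :
    ∃ dv dV : ℕ → ℝ → ℝ, dv 0 = v ∧ dV 0 = V ∧
      (∀ k : ℕ, ∀ y > (0:ℝ), HasDerivAt (dv k) (dv (k + 1) y) y) ∧
      (∀ k : ℕ, ∀ y > (0:ℝ), HasDerivAt (dV k) (dV (k + 1) y) y) ∧
      (∀ n : ℕ, 1 ≤ n → ∀ y > (0:ℝ),
        MeasureTheory.Integrable (fun ω => dV n (y * Y ω) * Y ω ^ n) P ∧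
        (-1 : ℝ) ^ n * dv n y = (-1 : ℝ) ^ n * ∫ ω, dV n (y * Y ω) * Y ω ^ n ∂P ∧
        (-1 : ℝ) ^ n * dv n y
          = ∫ ω, (∫ z in Set.Ioi (0:ℝ),
              Real.exp (-(z * (y * Y ω))) * z ^ (n - 1) * Y ω ^ n ∂μ) ∂P ∧
        0 < (-1 : ℝ) ^ n * dv n y) :=
  stmt9_general P Y hYm hYpos μ hμne V hint hV' v hv hVint hdom
end

section
/- Let v : (0,∞) → ℝ be real-analytic with −v′ completely monotonic, (−1)^n v^(n)(y) > 0 for every integer n ≥ 1 and every y > 0, lim_{y↓0} v′(y) = −∞, and lim_{y→∞} v′(y) = 0. Define u(x) := inf_{y>0} (v(y) + x·y) for x > 0. Then u is real-analytic on (0,∞), strictly increasing, strictly concave, satisfies the Inada conditions lim_{x↓0} u′(x) = ∞ and lim_{x→∞} u′(x) = 0, and the inverse of its marginal is (u′)^{−1} = −v′, which is completely monotonic; i.e., u belongs to the class CMIM. -/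
/-!
Since `v'' > 0`, `g := -v'` is continuous and strictly decreasing on `(0, ∞)`; its boundary limits
`∞` and `0` and the intermediate value theorem make it a bijection of `(0, ∞)` onto itself. Let `w`
be the inverse. By convexity of `v`, `y ↦ v y + x y` is minimal where `v' y = -x`, i.e. at `w x`,
so `u x = v (w x) + x w x`. The analytic inverse function theorem (`g' = -v'' ≠ 0`) makes `w`, hence
`u`, analytic, and in `u'` the terms containing `w'` cancel (envelope theorem), so `u' = w`: it is
positive and strictly decreasing and inherits the Inada limits from those of `v'`.
-/

open Filter Set Topology Function

theorem ConvexOn.isMinOn_of_hasDerivAt_eq_zero {S : Set ℝ} {f : ℝ → ℝ} {z : ℝ}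
    (hf : ConvexOn ℝ S f) (hz : z ∈ interior S) (hd : HasDerivAt f 0 z) : IsMinOn f S z :=
  hf.isMinOn_of_rightDeriv_eq_zero hz (hd.hasDerivWithinAt.derivWithin (uniqueDiffWithinAt_Ioi z))

theorem ConvexOn.sInf_image_add_mul_eq {S : Set ℝ} {v : ℝ → ℝ} {x z : ℝ}
    (hv : ConvexOn ℝ S v) (hz : z ∈ interior S) (hd : HasDerivAt v (-x) z) :
    sInf ((fun y => v y + x * y) '' S) = v z + x * z := by
  have hconv : ConvexOn ℝ S (fun y => v y + x * y) :=
    hv.add ((LinearMap.mul ℝ ℝ x).convexOn hv.1)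
  have hd0 : HasDerivAt (fun y => v y + x * y) 0 z :=
    (hd.add ((hasDerivAt_id' z).const_mul x)).congr_deriv (by ring)
  have hmin := hconv.isMinOn_of_hasDerivAt_eq_zero hz hd0
  exact IsLeast.csInf_eq ⟨mem_image_of_mem _ (interior_subset hz), forall_mem_image.2 hmin⟩

section OpenDomain

variable {D : Set ℝ} {f f' f'' : ℝ → ℝ}

theorem convexOn_of_hasDerivAt2_nonneg (hD : Convex ℝ D) (hDo : IsOpen D)
    (hf : ∀ x ∈ D, HasDerivAt f (f' x) x) (hf' : ∀ x ∈ D, HasDerivAt f' (f'' x) x)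
    (hf'' : ∀ x ∈ D, 0 ≤ f'' x) : ConvexOn ℝ D f :=
  convexOn_of_hasDerivWithinAt2_nonneg hD (fun x hx => (hf x hx).continuousAt.continuousWithinAt)
    (by simpa [hDo.interior_eq] using fun x hx => (hf x hx).hasDerivWithinAt)
    (by simpa [hDo.interior_eq] using fun x hx => (hf' x hx).hasDerivWithinAt)
    (by simpa [hDo.interior_eq] using hf'')

theorem strictMonoOn_of_hasDerivAt_pos (hD : Convex ℝ D) (hDo : IsOpen D)
    (hf : ∀ x ∈ D, HasDerivAt f (f' x) x) (hf' : ∀ x ∈ D, 0 < f' x) : StrictMonoOn f D :=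
  strictMonoOn_of_hasDerivWithinAt_pos hD (fun x hx => (hf x hx).continuousAt.continuousWithinAt)
    (by simpa [hDo.interior_eq] using fun x hx => (hf x hx).hasDerivWithinAt)
    (by simpa [hDo.interior_eq] using hf')

theorem strictAntiOn_of_hasDerivAt_neg (hD : Convex ℝ D) (hDo : IsOpen D)
    (hf : ∀ x ∈ D, HasDerivAt f (f' x) x) (hf' : ∀ x ∈ D, f' x < 0) : StrictAntiOn f D :=
  strictAntiOn_of_hasDerivWithinAt_neg hD (fun x hx => (hf x hx).continuousAt.continuousWithinAt)
    (by simpa [hDo.interior_eq] using fun x hx => (hf x hx).hasDerivWithinAt)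
    (by simpa [hDo.interior_eq] using hf')

theorem StrictAntiOn.strictConcaveOn_of_hasDerivAt (hD : Convex ℝ D) (hDo : IsOpen D)
    (hf : ∀ x ∈ D, HasDerivAt f (f' x) x) (hf' : StrictAntiOn f' D) : StrictConcaveOn ℝ D f := by
  refine StrictAntiOn.strictConcaveOn_of_deriv hD
    (fun x hx => (hf x hx).continuousAt.continuousWithinAt) ?_
  rw [hDo.interior_eq]
  exact hf'.congr fun x hx => ((hf x hx).deriv).symm

end OpenDomain

theorem AnalyticOnNhd.of_hasDerivAt {𝕜 F : Type*} [NontriviallyNormedField 𝕜]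
    [NormedAddCommGroup F] [NormedSpace 𝕜 F] [CompleteSpace F] {f f' : 𝕜 → F} {s : Set 𝕜}
    (hf : AnalyticOnNhd 𝕜 f s) (hs : IsOpen s) (hf' : ∀ y ∈ s, HasDerivAt f (f' y) y) :
    AnalyticOnNhd 𝕜 f' s := fun y hy =>
  (hf.deriv y hy).congr (eventually_of_mem (hs.mem_nhds hy) fun z hz => (hf' z hz).deriv)

theorem AnalyticAt.analyticAt_of_leftInvOn {𝕜 : Type*} [NontriviallyNormedField 𝕜]
    [CompleteSpace 𝕜] [CharZero 𝕜] {f g : 𝕜 → 𝕜} {s : Set 𝕜} {x : 𝕜} (hs : IsOpen s)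
    (hgf : LeftInvOn g f s) (hx : g x ∈ s) (hfx : f (g x) = x) (hf : AnalyticAt 𝕜 f (g x))
    (hf' : deriv f (g x) ≠ 0) : AnalyticAt 𝕜 g x := by
  have hid : AnalyticAt 𝕜 (g ∘ f) (g x) :=
    analyticAt_id.congr (eventually_of_mem (hs.mem_nhds hx) fun z hz => (hgf hz).symm)
  simpa only [hfx] using (analyticAt_comp_iff_of_deriv_ne_zero hf hf').1 hid

theorem ContinuousOn.surjOn_Ioi_zero_of_tendsto {g : ℝ → ℝ} (hg : ContinuousOn g (Ioi 0))
    (h0 : Tendsto g (𝓝[>] 0) atTop) (hinf : Tendsto g atTop (𝓝 0)) :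
    SurjOn g (Ioi 0) (Ioi 0) := by
  intro x (hx : 0 < x)
  obtain ⟨a, hxa, ha⟩ := ((h0.eventually_gt_atTop x).and self_mem_nhdsWithin).exists
  obtain ⟨b, hab, hbx⟩ := ((eventually_ge_atTop a).and (hinf.eventually (gt_mem_nhds hx))).exists
  obtain ⟨y, hy, rfl⟩ := intermediate_value_Icc' hab (hg.mono fun y hy => lt_of_lt_of_le ha hy.1)
    ⟨hbx.le, hxa.le⟩
  exact ⟨y, lt_of_lt_of_le ha hy.1, rfl⟩

theorem bijOn_neg_Ioi_zero_of_tendsto {v' : ℝ → ℝ} (hanti : StrictAntiOn (-v') (Ioi 0))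
    (hc : ContinuousOn v' (Ioi 0)) (hneg : ∀ y ∈ Ioi (0:ℝ), v' y < 0)
    (h0 : Tendsto v' (𝓝[>] 0) atBot) (hinf : Tendsto v' atTop (𝓝 0)) :
    BijOn (-v') (Ioi 0) (Ioi 0) :=
  ⟨fun y hy => neg_pos.2 (hneg y hy), hanti.injOn,
    hc.neg.surjOn_Ioi_zero_of_tendsto (tendsto_neg_atBot_atTop.comp h0)
      (by rw [← neg_zero]; exact hinf.neg)⟩

theorem StrictAntiOn.invFunOn {α β : Type*} [LinearOrder α] [LinearOrder β] [Nonempty α]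
    {g : α → β} {s : Set α} {t : Set β} (hg : StrictAntiOn g s) (hst : BijOn g s t) :
    StrictAntiOn (invFunOn g s) t := by
  intro a ha b hb hab
  have hw := hst.invOn_invFunOn
  have hmaps := hst.surjOn.mapsTo_invFunOn
  rwa [← hg.lt_iff_gt (hmaps ha) (hmaps hb), hw.2 ha, hw.2 hb]

theorem StrictAntiOn.tendsto_nhdsGT_zero_atTop {w g : ℝ → ℝ} (hw : StrictAntiOn w (Ioi 0))
    (hg : MapsTo g (Ioi 0) (Ioi 0)) (hwg : LeftInvOn w g (Ioi 0)) :
    Tendsto w (𝓝[>] 0) atTop := by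
  refine tendsto_atTop.2 fun M => ?_
  have hM : 0 < max M 1 := zero_lt_one.trans_le (le_max_right M 1)
  filter_upwards [Ioo_mem_nhdsGT (hg hM)] with x hx
  calc M ≤ max M 1 := le_max_left M 1
    _ = w (g (max M 1)) := (hwg hM).symm
    _ ≤ w x := (hw hx.1 (hg hM) hx.2).le

theorem StrictAntiOn.tendsto_atTop_zero {w g : ℝ → ℝ} (hw : StrictAntiOn w (Ioi 0))
    (hwpos : MapsTo w (Ioi 0) (Ioi 0)) (hg : MapsTo g (Ioi 0) (Ioi 0))
    (hwg : LeftInvOn w g (Ioi 0)) : Tendsto w atTop (𝓝 0) := by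
  refine tendsto_order.2 ⟨fun a ha => ?_, fun ε hε => ?_⟩
  · filter_upwards [eventually_gt_atTop 0] with x hx using ha.trans (hwpos hx)
  · filter_upwards [eventually_gt_atTop (max (g ε) 0)] with x hx
    have hx0 : 0 < x := (le_max_right _ _).trans_lt hx
    rw [← hwg hε]
    exact hw (hg hε) hx0 ((le_max_left _ _).trans_lt hx)

theorem hasDerivAt_envelope {v w : ℝ → ℝ} {x : ℝ} (hv : HasDerivAt v (-x) (w x))
    (hw : DifferentiableAt ℝ w x) : HasDerivAt (fun z => v (w z) + z * w z) (w x) x :=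
  ((hv.comp x hw.hasDerivAt).add ((hasDerivAt_id' x).mul hw.hasDerivAt)).congr_deriv (by ring)

/-- Let `v` be real-analytic on `(0,∞)` with `−v'` completely monotonic,
`(−1)ⁿ v⁽ⁿ⁾ > 0` on `(0,∞)` for every `n ≥ 1`, `v'(0+) = −∞` and `v'(∞) = 0`.  Define
`u(x) = inf_{y>0} (v(y) + x y)`.  Then `u` is real-analytic on `(0,∞)`, strictly
increasing, strictly concave, differentiable with marginal `u'` satisfying the Inada
conditions `u'(0+) = ∞`, `u'(∞) = 0`, and the inverse of `u'` is `−v'` (which is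
completely monotonic); i.e. `u ∈ 𝒞ℳℐℳ`. -/
theorem stmt10 (v : ℝ → ℝ) (dv : ℕ → ℝ → ℝ) (hdv0 : dv 0 = v)
    (hderiv : ∀ k : ℕ, ∀ y > (0:ℝ), HasDerivAt (dv k) (dv (k + 1) y) y)
    (hanal : AnalyticOnNhd ℝ v (Set.Ioi 0))
    (hsign : ∀ n : ℕ, 1 ≤ n → ∀ y > (0:ℝ), 0 < (-1 : ℝ) ^ n * dv n y)
    (hv'0 : Filter.Tendsto (dv 1) (nhdsWithin 0 (Set.Ioi 0)) Filter.atBot)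
    (hv'inf : Filter.Tendsto (dv 1) Filter.atTop (nhds 0))
    (u : ℝ → ℝ)
    (hu : ∀ x : ℝ, u x = sInf ((fun y => v y + x * y) '' Set.Ioi 0)) :
    AnalyticOnNhd ℝ u (Set.Ioi 0) ∧
    StrictMonoOn u (Set.Ioi 0) ∧
    StrictConcaveOn ℝ (Set.Ioi 0) u ∧
    ∃ du : ℝ → ℝ,
      (∀ x > (0:ℝ), HasDerivAt u (du x) x) ∧
      Filter.Tendsto du (nhdsWithin 0 (Set.Ioi 0)) Filter.atTop ∧
      Filter.Tendsto du Filter.atTop (nhds 0) ∧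
      (∀ y > (0:ℝ), du (-(dv 1 y)) = y) ∧
      (∀ x > (0:ℝ), -(dv 1 (du x)) = x) := by
  have hv' : ∀ y > (0:ℝ), HasDerivAt v (dv 1 y) y := hdv0 ▸ hderiv 0
  have hv''_pos : ∀ y > (0:ℝ), 0 < dv 2 y := fun y hy => by simpa using hsign 2 one_le_two y hy
  have hv_conv : ConvexOn ℝ (Ioi 0) v :=
    convexOn_of_hasDerivAt2_nonneg (convex_Ioi 0) isOpen_Ioi hv' (hderiv 1) fun y hy =>
      (hv''_pos y hy).le
  have hg_anti : StrictAntiOn (-dv 1) (Ioi 0) :=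
    strictAntiOn_of_hasDerivAt_neg (convex_Ioi 0) isOpen_Ioi (fun y hy => (hderiv 1 y hy).neg)
      fun y hy => neg_neg_of_pos (hv''_pos y hy)
  have hg_bij : BijOn (-dv 1) (Ioi 0) (Ioi 0) :=
    bijOn_neg_Ioi_zero_of_tendsto hg_anti
      (fun y hy => (hderiv 1 y hy).continuousAt.continuousWithinAt)
      (fun y hy => by simpa using hsign 1 le_rfl y hy) hv'0 hv'inf
  set w := invFunOn (-dv 1) (Ioi 0)
  have hw_inv : InvOn w (-dv 1) (Ioi 0) (Ioi 0) := hg_bij.invOn_invFunOn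
  have hw_pos : MapsTo w (Ioi 0) (Ioi 0) := hg_bij.surjOn.mapsTo_invFunOn
  have hw_anti : StrictAntiOn w (Ioi 0) := hg_anti.invFunOn hg_bij
  have hw_anal : ∀ x > (0:ℝ), AnalyticAt ℝ w x := fun x hx =>
    ((hanal.of_hasDerivAt isOpen_Ioi hv').neg (w x) (hw_pos hx)).analyticAt_of_leftInvOn
      isOpen_Ioi hw_inv.1 (hw_pos hx) (hw_inv.2 hx)
      (by simpa [((hderiv 1 _ (hw_pos hx)).neg.deriv)] using (hv''_pos _ (hw_pos hx)).ne')
  have hv'_w : ∀ x > (0:ℝ), HasDerivAt v (-x) (w x) := fun x hx =>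
    (hv' (w x) (hw_pos hx)).congr_deriv (neg_eq_iff_eq_neg.1 (hw_inv.2 hx))
  have hu_nhds : ∀ x > (0:ℝ), (fun z => v (w z) + z * w z) =ᶠ[𝓝 x] u := fun x hx =>
    eventually_of_mem (Ioi_mem_nhds hx) fun z hz => by
      rw [hu, hv_conv.sInf_image_add_mul_eq (by simpa using hw_pos hz) (hv'_w z hz)]
  have hu_anal : AnalyticOnNhd ℝ u (Ioi 0) := fun x hx =>
    (((hanal _ (hw_pos hx)).comp (hw_anal x hx)).add
      (analyticAt_id.mul (hw_anal x hx))).congr (hu_nhds x hx)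
  have hu' : ∀ x > (0:ℝ), HasDerivAt u (w x) x := fun x hx =>
    (hasDerivAt_envelope (hv'_w x hx) (hw_anal x hx).differentiableAt).congr_of_eventuallyEq
      (hu_nhds x hx).symm
  exact ⟨hu_anal,
    strictMonoOn_of_hasDerivAt_pos (convex_Ioi 0) isOpen_Ioi hu' fun x hx => hw_pos hx,
    hw_anti.strictConcaveOn_of_hasDerivAt (convex_Ioi 0) isOpen_Ioi hu', w, hu',
    hw_anti.tendsto_nhdsGT_zero_atTop hg_bij.mapsTo hw_inv.1,
    hw_anti.tendsto_atTop_zero hw_pos hg_bij.mapsTo hw_inv.1, fun y hy => hw_inv.1 hy,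
    fun x hx => hw_inv.2 hx⟩
end

section
/- There exist a constant C > 0 and a real-analytic function f : (0,∞) → ℝ such that: (i) 1 ≤ f(y) ≤ 2 for every y > 0; (ii) f′(y) < 0 for every y > 0; and (iii) −f′(i) ≥ i²/C for every positive integer i. -/
/-!
With `θ = 2πy` and `k = eʸ`, the function
`Ψ(y) = θ + 2 arctan ((k - 1) sin θ / ((k + 1) - (k - 1) cos θ))`
has, at fixed `k`, the Poisson kernel of radius `(k - 1)/(k + 1)` as its `θ`-derivative.
Letting the radius tend to `1` as `y` grows keeps the derivative positive,
`Ψ'(y) = 2k (2π + sin θ) / ((k² + 1) - (k² - 1) cos θ)`, and makes it peak at the integers,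
where `Ψ'(i) = 2π eⁱ` while `Ψ(i) = 2πi`. So `f = 3/2 - arctan Ψ / π` is analytic with values
in `(1, 2)`, strictly decreasing, and `-f'(i) = 2eⁱ / (1 + 4π²i²)` outgrows `i²`.
-/

open Real Set
open scoped ContDiff

lemma add_one_sub_sub_one_mul_cos_pos {k : ℝ} (hk : 0 < k) (θ : ℝ) :
    0 < k + 1 - (k - 1) * cos θ := by
  rcases (cos_le_one θ).lt_or_eq with h | h
  · nlinarith [neg_one_le_cos θ]
  · rw [h]; norm_num

lemma sq_mul_one_add_two_pi_mul_sq_le_exp {x : ℝ} (hx : 1 ≤ x) :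
    x ^ 2 * (1 + (2 * π * x) ^ 2) ≤ 1000 * exp x := by
  have hπ : (2 * π) ^ 2 ≤ 40 := by nlinarith [pi_pos, pi_lt_d2]
  have hx2 : 1 ≤ x ^ 2 := one_le_pow₀ hx
  have hexp : x ^ 4 / 24 ≤ exp x := by
    simpa [Nat.factorial] using pow_div_factorial_le_exp x (by linarith) 4
  calc x ^ 2 * (1 + (2 * π * x) ^ 2) ≤ x ^ 2 * (41 * x ^ 2) := by
        gcongr; nlinarith
    _ ≤ 1000 * exp x := by nlinarith

noncomputable section

def staircase (y : ℝ) : ℝ :=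
  2 * π * y + 2 * arctan ((exp y - 1) * sin (2 * π * y) /
    (exp y + 1 - (exp y - 1) * cos (2 * π * y)))

def staircaseDeriv (y : ℝ) : ℝ :=
  2 * exp y * (2 * π + sin (2 * π * y)) /
    (exp y ^ 2 + 1 - (exp y ^ 2 - 1) * cos (2 * π * y))

lemma contDiff_staircase : ContDiff ℝ ω staircase := by
  have hθ : ContDiff ℝ ω fun y : ℝ => 2 * π * y := contDiff_const.mul contDiff_id
  refine hθ.add (contDiff_const.mul (contDiff_arctan.comp ?_))
  exact ((contDiff_exp.sub contDiff_const).mul (contDiff_sin.comp hθ)).div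
    ((contDiff_exp.add contDiff_const).sub ((contDiff_exp.sub contDiff_const).mul
      (contDiff_cos.comp hθ)))
    fun y => (add_one_sub_sub_one_mul_cos_pos (exp_pos y) _).ne'

lemma hasDerivAt_staircase (y : ℝ) : HasDerivAt staircase (staircaseDeriv y) y := by
  have hθ : HasDerivAt (fun y => 2 * π * y) (2 * π) y := by
    simpa using (hasDerivAt_id y).const_mul (2 * π)
  have hN := ((hasDerivAt_exp y).sub_const 1).mul hθ.sin
  have hD := ((hasDerivAt_exp y).add_const 1).sub (((hasDerivAt_exp y).sub_const 1).mul hθ.cos)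
  have hD_pos := add_one_sub_sub_one_mul_cos_pos (exp_pos y) (2 * π * y)
  have hD'_pos := add_one_sub_sub_one_mul_cos_pos (pow_pos (exp_pos y) 2) (2 * π * y)
  refine (hθ.add ((hN.div hD hD_pos.ne').arctan.const_mul 2)).congr_deriv ?_
  simp only [Pi.mul_apply, Pi.sub_apply, Pi.div_apply, staircaseDeriv]
  set k := exp y
  set θ := 2 * π * y
  field_simp
  rw [eq_div_iff (by linarith)]
  linear_combination
    (-(k - 1) ^ 2 * (π * (k ^ 2 + 1 - (k ^ 2 - 1) * cos θ) + k * (2 * π + sin θ))) *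
      sin_sq_add_cos_sq θ

lemma staircaseDeriv_pos (y : ℝ) : 0 < staircaseDeriv y := by
  have hden := add_one_sub_sub_one_mul_cos_pos (pow_pos (exp_pos y) 2) (2 * π * y)
  have hnum : 0 < 2 * π + sin (2 * π * y) := by nlinarith [neg_one_le_sin (2 * π * y), pi_gt_three]
  unfold staircaseDeriv
  positivity

lemma sin_two_pi_mul_natCast (i : ℕ) : sin (2 * π * i) = 0 := by
  rw [show 2 * π * i = (2 * i : ℕ) * π by push_cast; ring, sin_nat_mul_pi]

lemma cos_two_pi_mul_natCast (i : ℕ) : cos (2 * π * i) = 1 := by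
  rw [mul_comm, cos_nat_mul_two_pi]

lemma staircase_natCast (i : ℕ) : staircase i = 2 * π * i := by
  simp [staircase, sin_two_pi_mul_natCast]

lemma staircaseDeriv_natCast (i : ℕ) : staircaseDeriv i = 2 * π * exp i := by
  rw [staircaseDeriv, sin_two_pi_mul_natCast, cos_two_pi_mul_natCast]
  field_simp
  ring

def profile (y : ℝ) : ℝ := 3 / 2 - arctan (staircase y) / π

def profileDeriv (y : ℝ) : ℝ := -(staircaseDeriv y / (1 + staircase y ^ 2) / π)

lemma contDiff_profile : ContDiff ℝ ω profile :=
  contDiff_const.sub ((contDiff_arctan.comp contDiff_staircase).div_const π)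

lemma hasDerivAt_profile (y : ℝ) : HasDerivAt profile (profileDeriv y) y := by
  refine (((hasDerivAt_staircase y).arctan.div_const π).const_sub (3 / 2)).congr_deriv ?_
  rw [profileDeriv, one_div_mul_eq_div]

lemma profile_mem_Ioo (y : ℝ) : profile y ∈ Ioo 1 2 := by
  have h₁ := neg_pi_div_two_lt_arctan (staircase y)
  have h₂ := arctan_lt_pi_div_two (staircase y)
  constructor
  · rw [profile, lt_sub_iff_add_lt, ← lt_sub_iff_add_lt', div_lt_iff₀ pi_pos]; linarith
  · rw [profile, sub_lt_iff_lt_add, ← sub_lt_iff_lt_add', lt_div_iff₀ pi_pos]; linarith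

lemma profileDeriv_neg (y : ℝ) : profileDeriv y < 0 := by
  have hΨ' := staircaseDeriv_pos y
  rw [profileDeriv, neg_lt_zero]
  positivity

lemma neg_profileDeriv_natCast (i : ℕ) :
    -profileDeriv i = 2 * exp i / (1 + (2 * π * i) ^ 2) := by
  rw [profileDeriv, neg_neg, staircase_natCast, staircaseDeriv_natCast]
  field_simp

end

/-- There exist a constant `C > 0` and a real-analytic function
`f : (0,∞) → ℝ` such that `1 ≤ f ≤ 2` on `(0,∞)`, `f' < 0` on `(0,∞)` and
`−f'(i) ≥ i²/C` for every positive integer `i`. -/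
theorem stmt11 :
    ∃ (C : ℝ) (f f' : ℝ → ℝ), 0 < C ∧
      AnalyticOnNhd ℝ f (Set.Ioi 0) ∧
      (∀ y > (0:ℝ), HasDerivAt f (f' y) y) ∧
      (∀ y > (0:ℝ), 1 ≤ f y ∧ f y ≤ 2) ∧
      (∀ y > (0:ℝ), f' y < 0) ∧
      (∀ i : ℕ, 1 ≤ i → (i : ℝ) ^ 2 / C ≤ -f' (i : ℝ)) := by
  refine ⟨500, profile, profileDeriv, by norm_num, contDiff_profile.analyticOnNhd,
    fun y _ => hasDerivAt_profile y,
    fun y _ => ⟨(profile_mem_Ioo y).1.le, (profile_mem_Ioo y).2.le⟩,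
    fun y _ => profileDeriv_neg y, fun i hi => ?_⟩
  rw [neg_profileDeriv_natCast, div_le_div_iff₀ (by norm_num) (by positivity)]
  linarith [sq_mul_one_add_two_pi_mul_sq_le_exp (Nat.one_le_cast.mpr hi : (1 : ℝ) ≤ i)]
end

section
/- Fix an integer k ≥ 1. Let V : (0,∞) → ℝ be k-times differentiable with (−1)^{k−1} V^(k−1)(y) > 0 and (−1)^k V^(k)(y) ≥ 0 for every y > 0, and suppose there exist constants 0 < c ≤ d < ∞ such that c ≤ −y V^(k)(y)/V^(k−1)(y) ≤ d for every y > 0. Let Ŷ : Ω → (0,∞) be a random variable on a probability space such that E[Ŷ^{k−1} (−1)^{k−1} V^(k−1)(yŶ)] < ∞ for every y > 0. Then the function w(y) := E[Ŷ^{k−1} V^(k−1)(yŶ)] is differentiable on (0,∞) with w′(y) = E[Ŷ^k V^(k)(yŶ)], and this expectation is finite for every y > 0. -/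
open MeasureTheory Filter Set Topology

/-!
Put `g = (-1)^(k-1) V^(k-1) > 0`. The sign condition on `V^(k)` makes `g` decreasing, and the
upper ratio bound reads `|z V^(k)(z)| ≤ d g(z)`. Hence for `t > a > 0`
`|Ŷ^k V^(k)(tŶ)| = Ŷ^(k-1) |tŶ V^(k)(tŶ)| / t ≤ (d / a) Ŷ^(k-1) g(aŶ)`,
an integrable bound uniform in `t` near `y`, and differentiation under the integral sign applies.
-/

theorem ContinuousOn.measurable_comp_of_mapsTo {Ω α β : Type*} [MeasurableSpace Ω]
    [TopologicalSpace α] [MeasurableSpace α] [OpensMeasurableSpace α]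
    [TopologicalSpace β] [MeasurableSpace β] [BorelSpace β]
    {f : α → β} {s : Set α} (hf : ContinuousOn f s) {g : Ω → α} (hg : Measurable g)
    (hgs : ∀ ω, g ω ∈ s) : Measurable (fun ω => f (g ω)) :=
  (continuousOn_iff_continuous_domRestrict.mp hf).measurable.comp (hg.subtype_mk (h := hgs))

theorem hasDerivAt_integral_pow_mul_comp_mul {Ω : Type*} [MeasurableSpace Ω] {μ : Measure Ω}
    {Y : Ω → ℝ} {f f' G : ℝ → ℝ} (hYm : Measurable Y) (hYpos : ∀ ω, 0 < Y ω)
    (hf : ∀ z > (0:ℝ), HasDerivAt f (f' z) z) (hG : AntitoneOn G (Ioi 0))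
    (hfG : ∀ z > (0:ℝ), |z * f' z| ≤ G z) (m : ℕ) {a y : ℝ} (ha : 0 < a) (hay : a < y)
    (hF_int : Integrable (fun ω => Y ω ^ m * f (y * Y ω)) μ)
    (hG_int : Integrable (fun ω => Y ω ^ m * G (a * Y ω)) μ) :
    Integrable (fun ω => Y ω ^ (m + 1) * f' (y * Y ω)) μ ∧
      HasDerivAt (fun t => ∫ ω, Y ω ^ m * f (t * Y ω) ∂μ)
        (∫ ω, Y ω ^ (m + 1) * f' (y * Y ω) ∂μ) y := by
  have hf_cont : ContinuousOn f (Ioi 0) := fun z hz => (hf z hz).continuousAt.continuousWithinAt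
  have hpos {t : ℝ} (ht : a < t) (ω : Ω) : 0 < t * Y ω := mul_pos (ha.trans ht) (hYpos ω)
  refine hasDerivAt_integral_of_dominated_loc_of_deriv_le (Ioi_mem_nhds hay) ?_ hF_int ?_
    (F := fun t ω => Y ω ^ m * f (t * Y ω)) (F' := fun t ω => Y ω ^ (m + 1) * f' (t * Y ω))
    (bound := fun ω => Y ω ^ m * G (a * Y ω) / a) ?_ (hG_int.div_const a) ?_
  · filter_upwards [Ioi_mem_nhds hay] with t ht
    exact ((hYm.pow_const m).mul (hf_cont.measurable_comp_of_mapsTo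
      (measurable_const.mul hYm) (hpos ht))).aestronglyMeasurable
  · -- `f'` agrees with the measurable `deriv f` on the range of `yY`
    have h_meas : Measurable (fun ω => Y ω ^ (m + 1) * deriv f (y * Y ω)) :=
      (hYm.pow_const _).mul ((measurable_deriv f).comp (measurable_const.mul hYm))
    refine h_meas.aestronglyMeasurable.congr (ae_of_all _ fun ω => ?_)
    simp only [(hf _ (hpos hay ω)).deriv]
  · refine ae_of_all _ fun ω t (ht : a < t) => ?_
    have ht0 : 0 < t := ha.trans ht
    have hY_pow : 0 < Y ω ^ m := pow_pos (hYpos ω) m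
    have hG_mono : G (t * Y ω) ≤ G (a * Y ω) :=
      hG (mul_pos ha (hYpos ω)) (hpos ht ω) (by gcongr; exact (hYpos ω).le)
    calc ‖Y ω ^ (m + 1) * f' (t * Y ω)‖ = Y ω ^ m * |t * Y ω * f' (t * Y ω)| / t := by
          rw [Real.norm_eq_abs, abs_mul, abs_mul, abs_mul, abs_of_pos ht0,
            abs_of_pos (hYpos ω), abs_of_pos (pow_pos (hYpos ω) _), pow_succ]
          field_simp
      _ ≤ Y ω ^ m * G (t * Y ω) / t := by gcongr; exact hfG _ (hpos ht ω)
      _ ≤ Y ω ^ m * G (a * Y ω) / t := by gcongr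
      _ ≤ Y ω ^ m * G (a * Y ω) / a := by
          have hG_nonneg : 0 ≤ G (a * Y ω) :=
            (abs_nonneg _).trans (hfG _ (mul_pos ha (hYpos ω)))
          gcongr
  · exact ae_of_all _ fun ω t (ht : a < t) =>
      (((hf _ (hpos ht ω)).comp t (hasDerivAt_mul_const (Y ω))).const_mul _).congr_deriv (by ring)

theorem antitoneOn_Ioi_of_hasDerivAt_nonpos {f f' : ℝ → ℝ} {a : ℝ}
    (hf : ∀ z > a, HasDerivAt f (f' z) z) (hf' : ∀ z > a, f' z ≤ 0) : AntitoneOn f (Ioi a) :=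
  antitoneOn_of_hasDerivWithinAt_nonpos (convex_Ioi a)
    (fun z hz => (hf z hz).continuousAt.continuousWithinAt)
    (fun z hz => (hf z (interior_subset hz)).hasDerivWithinAt)
    (fun z hz => hf' z (interior_subset hz))

theorem abs_mul_le_of_neg_mul_div_le {ε u v z d : ℝ} (hε : |ε| = 1) (hv : 0 < ε * v)
    (hu : ε * u ≤ 0) (hz : 0 ≤ z) (h : -(z * u) / v ≤ d) : |z * u| ≤ d * (ε * v) := by
  have hε0 : ε ≠ 0 := by rintro rfl; simp at hε
  have h_signed : -(z * u) / v = -(z * (ε * u)) / (ε * v) := by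
    rw [show -(z * (ε * u)) = ε * -(z * u) by ring, mul_div_mul_left _ _ hε0]
  calc |z * u| = |z * (ε * u)| := by rw [mul_left_comm, abs_mul ε, hε, one_mul]
    _ = -(z * (ε * u)) := abs_of_nonpos (mul_nonpos_of_nonneg_of_nonpos hz hu)
    _ ≤ d * (ε * v) := by rw [← div_le_iff₀ hv, ← h_signed]; exact h

theorem stmt15_general {Ω : Type*} [MeasurableSpace Ω] (P : Measure Ω)
    (k : ℕ) (hk : 1 ≤ k) (dV : ℕ → ℝ → ℝ)
    (hderiv : ∀ j < k, ∀ y > (0:ℝ), HasDerivAt (dV j) (dV (j + 1) y) y)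
    (hpos : ∀ y > (0:ℝ), 0 < (-1 : ℝ) ^ (k - 1) * dV (k - 1) y)
    (hnn : ∀ y > (0:ℝ), 0 ≤ (-1 : ℝ) ^ k * dV k y)
    (c d : ℝ)
    (hbd : ∀ y > (0:ℝ), c ≤ -(y * dV k y) / dV (k - 1) y ∧
      -(y * dV k y) / dV (k - 1) y ≤ d)
    (Y : Ω → ℝ) (hYm : Measurable Y) (hYpos : ∀ ω, 0 < Y ω)
    (hint : ∀ y > (0:ℝ),
      MeasureTheory.Integrable (fun ω => Y ω ^ (k - 1) * dV (k - 1) (y * Y ω)) P) :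
    ∀ y > (0:ℝ),
      MeasureTheory.Integrable (fun ω => Y ω ^ k * dV k (y * Y ω)) P ∧
      HasDerivAt (fun t => ∫ ω, Y ω ^ (k - 1) * dV (k - 1) (t * Y ω) ∂P)
        (∫ ω, Y ω ^ k * dV k (y * Y ω) ∂P) y := by
  intro y hy
  set ε : ℝ := (-1) ^ (k - 1)
  have hD : ∀ z > (0:ℝ), HasDerivAt (dV (k - 1)) (dV k z) z := by
    simpa only [Nat.sub_add_cancel hk] using hderiv (k - 1) (by omega)
  have hD_signed : ∀ z > (0:ℝ), ε * dV k z ≤ 0 := fun z hz => by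
    have h := hnn z hz
    rw [← Nat.sub_add_cancel hk, pow_succ, Nat.sub_add_cancel hk] at h
    linarith
  have h_anti : AntitoneOn (fun z => ε * dV (k - 1) z) (Ioi 0) :=
    antitoneOn_Ioi_of_hasDerivAt_nonpos (fun z hz => (hD z hz).const_mul ε) hD_signed
  have h_bound : ∀ z > (0:ℝ), |z * dV k z| ≤ d * (ε * dV (k - 1) z) := fun z hz =>
    abs_mul_le_of_neg_mul_div_le (abs_neg_one_pow _) (hpos z hz) (hD_signed z hz) hz.le
      (hbd z hz).2
  have hd : 0 ≤ d := nonneg_of_mul_nonneg_left ((abs_nonneg _).trans (h_bound 1 one_pos))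
    (hpos 1 one_pos)
  have h_int : Integrable (fun ω => Y ω ^ (k - 1) * (d * (ε * dV (k - 1) (y / 2 * Y ω)))) P :=
    ((hint (y / 2) (half_pos hy)).const_mul (d * ε)).congr (ae_of_all _ fun ω => by ring)
  simpa only [Nat.sub_add_cancel hk] using
    hasDerivAt_integral_pow_mul_comp_mul hYm hYpos hD
      (fun _ hs _ ht hst => mul_le_mul_of_nonneg_left (h_anti hs ht hst) hd) h_bound (k - 1)
      (half_pos hy) (half_lt_self hy) (hint y hy) h_int

/-- Fix `k ≥ 1`.  Let `V` be `k`-times differentiable on `(0,∞)` (with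
derivative sequence `dV`) such that `(−1)^{k−1} V^{(k−1)} > 0`, `(−1)^k V^{(k)} ≥ 0`, and
`c ≤ −y V^{(k)}(y)/V^{(k−1)}(y) ≤ d` on `(0,∞)` for constants `0 < c ≤ d < ∞`.  Let
`Ŷ > 0` be a random variable with `E[Ŷ^{k−1} (−1)^{k−1} V^{(k−1)}(yŶ)] < ∞` for every
`y > 0`.  Then `w(y) := E[Ŷ^{k−1} V^{(k−1)}(yŶ)]` is differentiable on `(0,∞)` with
`w'(y) = E[Ŷ^k V^{(k)}(yŶ)]`, this expectation being finite for every `y > 0`. -/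
theorem stmt15 {Ω : Type*} [MeasurableSpace Ω] (P : Measure Ω) [IsProbabilityMeasure P]
    (k : ℕ) (hk : 1 ≤ k) (V : ℝ → ℝ) (dV : ℕ → ℝ → ℝ) (hdV0 : dV 0 = V)
    (hderiv : ∀ j < k, ∀ y > (0:ℝ), HasDerivAt (dV j) (dV (j + 1) y) y)
    (hpos : ∀ y > (0:ℝ), 0 < (-1 : ℝ) ^ (k - 1) * dV (k - 1) y)
    (hnn : ∀ y > (0:ℝ), 0 ≤ (-1 : ℝ) ^ k * dV k y)
    (c d : ℝ) (hc : 0 < c) (hcd : c ≤ d)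
    (hbd : ∀ y > (0:ℝ), c ≤ -(y * dV k y) / dV (k - 1) y ∧
      -(y * dV k y) / dV (k - 1) y ≤ d)
    (Y : Ω → ℝ) (hYm : Measurable Y) (hYpos : ∀ ω, 0 < Y ω)
    (hint : ∀ y > (0:ℝ),
      MeasureTheory.Integrable (fun ω => Y ω ^ (k - 1) * dV (k - 1) (y * Y ω)) P) :
    ∀ y > (0:ℝ),
      MeasureTheory.Integrable (fun ω => Y ω ^ k * dV k (y * Y ω)) P ∧
      HasDerivAt (fun t => ∫ ω, Y ω ^ (k - 1) * dV (k - 1) (t * Y ω) ∂P)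
        (∫ ω, Y ω ^ k * dV k (y * Y ω) ∂P) y :=
  stmt15_general P k hk dV hderiv hpos hnn c d hbd Y hYm hYpos hint
end

section
/- Let ξ and η be nonnegative integrable random variables on a probability space such that ξ ≥ E[η | σ(ξ)] almost surely, where σ(ξ) is the sigma-algebra generated by ξ. Then ξ ⪰₂ η; that is, F_{ξ,2}(y) ≤ F_{η,2}(y) for every y ≥ 0, equivalently E[(y − ξ)⁺] ≤ E[(y − η)⁺] for every y ≥ 0. -/
open MeasureTheory Filter Set Topology ENNReal

/-!
Both conclusions reduce to `E[(y - ξ)⁺] ≤ E[(y - η)⁺]`, since by Fubini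
`∫₀^y P(ξ ≤ t) dt = ∫ |{t ∈ (0, y] : ξ ≤ t}| dP = E[(y - ξ)⁺]` for `ξ ≥ 0`.
For that inequality, `(y - η)⁺ ≥ y - η` gives `E[(y - η)⁺ | σ(ξ)] ≥ y - E[η | σ(ξ)] ≥ y - ξ`,
and the left side is also nonnegative, so it dominates `(y - ξ)⁺`; now take expectations.
-/

lemma volume_Ici_inter_Ioc {a y : ℝ} (ha : 0 ≤ a) :
    volume (Ici a ∩ Ioc 0 y) = ENNReal.ofReal (y - a) := by
  apply le_antisymm
  · calc volume (Ici a ∩ Ioc 0 y) ≤ volume (Icc a y) := measure_mono fun t ht => ⟨ht.1, ht.2.2⟩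
      _ = _ := Real.volume_Icc
  · calc ENNReal.ofReal (y - a) = volume (Ioc a y) := Real.volume_Ioc.symm
      _ ≤ volume (Ici a ∩ Ioc 0 y) :=
        measure_mono fun t ht => ⟨ht.1.le, ha.trans_lt ht.1, ht.2⟩

lemma integral_max_sub_le_of_condExp_le {Ω : Type*} {m m₀ : MeasurableSpace Ω}
    {P : Measure[m₀] Ω} [IsFiniteMeasure P] {ξ η : Ω → ℝ} (hm : m ≤ m₀)
    (hξi : Integrable ξ P) (hηi : Integrable η P) (hcond : ∀ᵐ ω ∂P, (P[η | m]) ω ≤ ξ ω) (y : ℝ) :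
    ∫ ω, max (y - ξ ω) 0 ∂P ≤ ∫ ω, max (y - η ω) 0 ∂P := by
  have hsub : Integrable (fun ω => y - η ω) P := (integrable_const y).sub hηi
  have hsub_le : P[fun ω => y - η ω | m] ≤ᵐ[P] P[fun ω => max (y - η ω) 0 | m] :=
    condExp_mono hsub hsub.pos_part (ae_of_all _ fun ω => le_max_left _ _)
  have hsub_eq : P[fun ω => y - η ω | m] =ᵐ[P] fun ω => y - (P[η | m]) ω := by
    filter_upwards [condExp_sub (integrable_const y) hηi m] with ω hω
    exact hω.trans (by rw [Pi.sub_apply, condExp_const hm])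
  have hnonneg : 0 ≤ᵐ[P] P[fun ω => max (y - η ω) 0 | m] :=
    condExp_nonneg (ae_of_all _ fun ω => le_max_right _ _)
  have hdom : (fun ω => max (y - ξ ω) 0) ≤ᵐ[P] P[fun ω => max (y - η ω) 0 | m] := by
    filter_upwards [hsub_le, hsub_eq, hnonneg, hcond] with ω h_le h_eq h0 hc
    exact max_le (by linarith) h0
  calc ∫ ω, max (y - ξ ω) 0 ∂P
      ≤ ∫ ω, (P[fun ω => max (y - η ω) 0 | m]) ω ∂P :=
        integral_mono_ae ((integrable_const y).sub hξi).pos_part integrable_condExp hdom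
    _ = ∫ ω, max (y - η ω) 0 ∂P := integral_condExp hm

section CDF

variable {Ω : Type*} [MeasurableSpace Ω] {P : Measure Ω} {ξ : Ω → ℝ}

lemma setLIntegral_Ioc_measure_le_eq [SFinite P] (hξm : Measurable ξ) (hξ0 : ∀ ω, 0 ≤ ξ ω)
    (y : ℝ) : ∫⁻ t in Ioc 0 y, P {ω | ξ ω ≤ t} = ∫⁻ ω, ENNReal.ofReal (y - ξ ω) ∂P := by
  have hS : MeasurableSet {p : ℝ × Ω | ξ p.2 ≤ p.1} :=
    measurableSet_le (hξm.comp measurable_snd) measurable_fst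
  calc ∫⁻ t in Ioc 0 y, P {ω | ξ ω ≤ t}
      = ((volume.restrict (Ioc 0 y)).prod P) {p | ξ p.2 ≤ p.1} := (Measure.prod_apply hS).symm
    _ = ∫⁻ ω, volume.restrict (Ioc 0 y) (Ici (ξ ω)) ∂P := Measure.prod_apply_symm hS
    _ = _ := by
      refine lintegral_congr fun ω => ?_
      rw [Measure.restrict_apply measurableSet_Ici, volume_Ici_inter_Ioc (hξ0 ω)]

lemma intervalIntegral_cdf_eq_integral_max_sub [IsFiniteMeasure P] (hξm : Measurable ξ)
    (hξ0 : ∀ ω, 0 ≤ ξ ω) {y : ℝ} (hy : 0 ≤ y) :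
    ∫ t in (0:ℝ)..y, (P {ω | ξ ω ≤ t}).toReal = ∫ ω, max (y - ξ ω) 0 ∂P := by
  have hcdf : Measurable fun t => P {ω | ξ ω ≤ t} :=
    Monotone.measurable fun a b hab => measure_mono fun ω h => le_trans h hab
  have hposPart : Measurable fun ω => max (y - ξ ω) 0 := by fun_prop
  rw [intervalIntegral.integral_of_le hy,
    integral_toReal hcdf.aemeasurable (ae_of_all _ fun t => measure_lt_top P _),
    integral_eq_lintegral_of_nonneg_ae (f := fun ω => max (y - ξ ω) 0)
      (ae_of_all _ fun ω => le_max_right _ _) hposPart.aestronglyMeasurable,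
    setLIntegral_Ioc_measure_le_eq hξm hξ0]
  simp only [ENNReal.ofReal_max, ENNReal.ofReal_zero, max_zero]

end CDF

/-- Let `ξ, η ≥ 0` be integrable random variables with
`ξ ≥ E[η | σ(ξ)]` almost surely.  Then `ξ ⪰₂ η`: `F_{ξ,2}(y) ≤ F_{η,2}(y)` for every
`y ≥ 0`, equivalently `E[(y − ξ)⁺] ≤ E[(y − η)⁺]` for every `y ≥ 0`. -/
theorem stmt19 {Ω : Type*} [MeasurableSpace Ω] (P : Measure Ω) [IsProbabilityMeasure P]
    (ξ η : Ω → ℝ) (hξm : Measurable ξ) (hηm : Measurable η)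
    (hξ0 : ∀ ω, 0 ≤ ξ ω) (hη0 : ∀ ω, 0 ≤ η ω)
    (hξi : MeasureTheory.Integrable ξ P) (hηi : MeasureTheory.Integrable η P)
    (hcond : ∀ᵐ ω ∂P,
      (P[η | MeasurableSpace.comap ξ Real.measurableSpace]) ω ≤ ξ ω) :
    ∀ y ≥ (0:ℝ),
      iterCdf (fun t => (P {ω | ξ ω ≤ t}).toReal) 1 y
        ≤ iterCdf (fun t => (P {ω | η ω ≤ t}).toReal) 1 y ∧
      ∫ ω, max (y - ξ ω) 0 ∂P ≤ ∫ ω, max (y - η ω) 0 ∂P := by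
  intro y hy
  have key := integral_max_sub_le_of_condExp_le hξm.comap_le hξi hηi hcond y
  refine ⟨?_, key⟩
  simp only [iterCdf]
  rwa [intervalIntegral_cdf_eq_integral_max_sub hξm hξ0 hy,
    intervalIntegral_cdf_eq_integral_max_sub hηm hη0 hy]
end
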